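/- arXiv:math/0202158 — 2 statements merged into one kernel-verified Lean document; each statement's English description precedes it below -/
import Mathlib

section
/- Let B ⊆ A be a module-finite extension of Noetherian integrally closed domains such that the double-dual multiplication map ε^{∨∨} : (A ⊗_B A)^{∨∨} → A admits an A ⊗_B A-linear section (equivalently, such that B ⊆ A is unramified in codimension 1). Then every finitely generated reflexive A-module M is isomorphic, as an A-module, to a direct summand of the double dual (A ⊗_B M)^{∨∨}, where A acts on A ⊗_B M through the left tensor factor and duals are taken over A. -/
open TensorProduct

/-- The multiplication map `ε : A ⊗_B A → A`, `x ⊗ y ↦ xy`, as an `A`-linear map,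
where `A` acts on `A ⊗_B A` through the left tensor factor. -/
noncomputable def epsilonLin (B A : Type*) [CommRing B] [CommRing A] [Algebra B A] :
    (A ⊗[B] A) →ₗ[A] A :=
  (Algebra.TensorProduct.lmul'' (S := A) B).toLinearMap

section Aux

variable (B A : Type*) [CommRing B] [CommRing A] [Algebra B A]
variable (M : Type*) [AddCommGroup M] [Module A M] [Module B M] [IsScalarTower B A M]

@[simp] lemma epsilonLin_tmul (x y : A) : epsilonLin B A (x ⊗ₜ y) = x * y := rfl

/-- `id ⊗ (y ↦ y • m)` as an `A`-linear map `A ⊗[B] A → A ⊗[B] M`. -/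
noncomputable def Jmap (m : M) : (A ⊗[B] A) →ₗ[A] (A ⊗[B] M) :=
  TensorProduct.AlgebraTensorModule.map LinearMap.id
    ((LinearMap.toSpanSingleton A M m).restrictScalars B)

@[simp] lemma Jmap_tmul (m : M) (x y : A) :
    Jmap B A M m (x ⊗ₜ y) = x ⊗ₜ (y • m) := rfl

lemma Jmap_add (m m' : M) : Jmap B A M (m + m') = Jmap B A M m + Jmap B A M m' := by
  ext x
  simp [smul_add, TensorProduct.tmul_add]

lemma Jmap_smul (a : A) (m : M) :
    Jmap B A M (a • m) = Jmap B A M m ∘ₗ LinearMap.mulLeft A ((1 : A) ⊗ₜ[B] a) := by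
  ext x
  simp [Algebra.TensorProduct.tmul_mul_tmul, smul_smul, mul_comm]

end Aux

/-- Let `B ⊆ A` be a module-finite extension of Noetherian integrally closed
domains such that the double-dual multiplication map
`ε^∨∨ : (A ⊗_B A)^∨∨ → A^∨∨ ≅ A` admits an `A ⊗_B A`-linear section (equivalently,
`B ⊆ A` is unramified in codimension 1).  Then every finitely generated reflexive
`A`-module `M` is a direct summand, as an `A`-module, of the double dual
`(A ⊗_B M)^∨∨`, where `A` acts on `A ⊗_B M` through the left tensor factor and
duals are taken over `A`. -/
theorem statement5 (B A : Type*) [CommRing B] [CommRing A]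
    [IsDomain B] [IsDomain A] [IsNoetherianRing B] [IsNoetherianRing A]
    [IsIntegrallyClosed B] [IsIntegrallyClosed A]
    [Algebra B A] [FaithfulSMul B A] [Module.Finite B A]
    (hsplit : ∃ s : A →ₗ[A] Module.Dual A (Module.Dual A (A ⊗[B] A)),
      (∀ a : A, (epsilonLin B A).dualMap.dualMap (s a) = Module.Dual.eval A A a) ∧
      ∀ (t : A ⊗[B] A) (a : A),
        s (epsilonLin B A t * a) = (LinearMap.mulLeft A t).dualMap.dualMap (s a))
    (M : Type*) [AddCommGroup M] [Module A M] [Module B M] [IsScalarTower B A M]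
    [Module.Finite A M] [Module.IsReflexive A M] :
    ∃ (i : M →ₗ[A] Module.Dual A (Module.Dual A (A ⊗[B] M)))
      (p : Module.Dual A (Module.Dual A (A ⊗[B] M)) →ₗ[A] M),
      p ∘ₗ i = LinearMap.id := by
  classical
  obtain ⟨s, hs1, hs2⟩ := hsplit
  -- the multiplication map `A ⊗[B] M → M`
  set μ : A ⊗[B] M →ₗ[A] M :=
    LinearMap.liftBaseChange A (LinearMap.id (R := B) (M := M)) with hμ
  have hμ_tmul : ∀ (x : A) (m : M), μ (x ⊗ₜ m) = x • m := fun x m => rfl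
  -- the section
  refine ⟨{ toFun := fun m => (Jmap B A M m).dualMap.dualMap (s 1)
            map_add' := ?_
            map_smul' := ?_ },
    (Module.evalEquiv A M).symm.toLinearMap ∘ₗ μ.dualMap.dualMap, ?_⟩
  · intro m m'
    ext f
    simp only [LinearMap.dualMap_apply, LinearMap.add_apply, Jmap_add]
    simp [LinearMap.dualMap, Module.Dual.transpose, LinearMap.comp_add]
  · intro a m
    ext f
    have key : s a = (LinearMap.mulLeft A ((1 : A) ⊗ₜ[B] a)).dualMap.dualMap (s 1) := by
      have := hs2 ((1 : A) ⊗ₜ[B] a) 1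
      simpa using this
    have hsa : s a = a • s 1 := by
      have : s a = s (a • (1 : A)) := by rw [smul_eq_mul, mul_one]
      rw [this, map_smul]
    calc (Jmap B A M (a • m)).dualMap.dualMap (s 1) f
        = s 1 (f ∘ₗ Jmap B A M (a • m)) := rfl
      _ = s 1 ((f ∘ₗ Jmap B A M m) ∘ₗ LinearMap.mulLeft A ((1 : A) ⊗ₜ[B] a)) := by
          rw [Jmap_smul, LinearMap.comp_assoc]
      _ = (LinearMap.mulLeft A ((1 : A) ⊗ₜ[B] a)).dualMap.dualMap (s 1) (f ∘ₗ Jmap B A M m) := rfl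
      _ = s a (f ∘ₗ Jmap B A M m) := by rw [key]
      _ = a • ((Jmap B A M m).dualMap.dualMap (s 1) f) := by
          rw [hsa]; rfl
  · ext m
    have key : μ.dualMap.dualMap ((Jmap B A M m).dualMap.dualMap (s 1))
        = Module.Dual.eval A M m := by
      ext g
      have hcomp : (g ∘ₗ μ) ∘ₗ Jmap B A M m
          = (g ∘ₗ LinearMap.toSpanSingleton A M m) ∘ₗ epsilonLin B A := by
        ext x
        simp [hμ_tmul, smul_smul, mul_comm]
      calc μ.dualMap.dualMap ((Jmap B A M m).dualMap.dualMap (s 1)) g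
          = s 1 ((g ∘ₗ μ) ∘ₗ Jmap B A M m) := rfl
        _ = s 1 ((g ∘ₗ LinearMap.toSpanSingleton A M m) ∘ₗ epsilonLin B A) := by rw [hcomp]
        _ = (epsilonLin B A).dualMap.dualMap (s 1) (g ∘ₗ LinearMap.toSpanSingleton A M m) := rfl
        _ = Module.Dual.eval A A 1 (g ∘ₗ LinearMap.toSpanSingleton A M m) := by rw [hs1]
        _ = g m := by simp
        _ = Module.Dual.eval A M m g := rfl
    simp only [LinearMap.comp_apply, LinearMap.coe_mk, AddHom.coe_mk, LinearMap.id_apply,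
      LinearEquiv.coe_coe]
    rw [key]
    rw [← Module.evalEquiv_toLinearMap]
    exact (Module.evalEquiv A M).symm_apply_apply m
end

section
/- Let K be a field, s ≥ 1, r ≥ 1, m ≥ 1 integers, λ ∈ K ∖ {0}, and let d = (d_1, …, d_{rs}) be an aperiodic s-sequence of integers, with indices read cyclically modulo rs. Let V be the K-vector space with basis {e'_{ik}, e''_{ik} : 1 ≤ i ≤ rs, 1 ≤ k ≤ m}. Define e_{ik} ∈ V by: e_{ik} = e'_{ik} + e''_{i+1,k} for i ≠ rs; e_{rs,k} = e'_{rs,k} + λ·e''_{1,k} + e''_{1,k−1} for k ≠ 1; and e_{rs,1} = e'_{rs,1} + λ·e''_{1,1}. Let G ⊆ V be the subspace spanned by all e_{ik}, and let W ⊆ V be the subspace spanned by the set {e'_{ik}, e''_{ik} : d_i > 0, 1 ≤ k ≤ m} ∪ {e'_{ik} + e''_{ik} : d_i = 0, 1 ≤ k ≤ m}. Then dim_K(W + G) − dim_K(G) = m·θ(d) − δ(d, λ). -/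
open scoped Classical

noncomputable section

namespace Stmt6

/-- `θ(d)` for a cyclic sequence `d` of length `n`: the sum of `θ(p)` over all
positive parts `p` of `d`.  A positive part is a maximal cyclic run
`(d_{k+1}, …, d_{k+l})` of non-negative entries (either the whole cycle, `l = n`,
or bounded by negative entries `d_k < 0` and `d_{k+l+1} < 0`); its contribution is
`l` if `l = n` or the run consists of zeros, and `l + 1` otherwise. -/
def theta (n : ℕ) [NeZero n] (d : ZMod n → ℤ) : ℕ :=
  (if ∀ i : ZMod n, 0 ≤ d i then n else 0) +
    ∑ k : ZMod n, ∑ l ∈ Finset.Ico 1 n,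
      if (∀ j : ℕ, 1 ≤ j → j ≤ l → 0 ≤ d (k + (j : ZMod n))) ∧
          d k < 0 ∧ d (k + (l : ZMod n) + 1) < 0 then
        (if ∀ j : ℕ, 1 ≤ j → j ≤ l → d (k + (j : ZMod n)) = 0 then l else l + 1)
      else 0

/-- `δ(d, λ) = 1` if `d = (0, …, 0)` and `λ = 1`, and `δ(d, λ) = 0` otherwise. -/
def delta (K : Type*) [Field K] (n : ℕ) (d : ZMod n → ℤ) (lam : K) : ℕ :=
  if (∀ i : ZMod n, d i = 0) ∧ lam = 1 then 1 else 0

/-- The `K`-vector space with basis `{e'_{ik}, e''_{ik} : i ∈ ZMod n, k ∈ Fin m}`. -/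
abbrev V (K : Type*) [Field K] (n m : ℕ) : Type _ :=
  ((ZMod n × Fin m) ⊕ (ZMod n × Fin m)) → K

/-- The basis vector `e'_{ik}`. -/
def e' {K : Type*} [Field K] {n m : ℕ} (i : ZMod n) (k : Fin m) : V K n m :=
  Pi.single (Sum.inl (i, k)) 1

/-- The basis vector `e''_{ik}`. -/
def e'' {K : Type*} [Field K] {n m : ℕ} (i : ZMod n) (k : Fin m) : V K n m :=
  Pi.single (Sum.inr (i, k)) 1

/-- The vector `e_{ik}` (the paper's index `i ∈ {1, …, rs}` is read modulo
`n = rs`, so the case `i = rs` becomes `i = 0`, and the paper's index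
`k ∈ {1, …, m}` becomes `k ∈ {0, …, m-1}`):
`e_{ik} = e'_{ik} + e''_{i+1,k}` for `i ≠ 0`, while
`e_{0k} = e'_{0k} + λ·e''_{1k} + e''_{1,k-1}` (the last term omitted if `k = 0`). -/
def eVec {K : Type*} [Field K] {n m : ℕ} (lam : K) (i : ZMod n) (k : Fin m) :
    V K n m :=
  if i = 0 then
    e' (0 : ZMod n) k + lam • e'' (1 : ZMod n) k +
      (if (k : ℕ) = 0 then 0 else
        e'' (1 : ZMod n) ⟨(k : ℕ) - 1, lt_of_le_of_lt (Nat.sub_le _ _) k.isLt⟩)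
  else e' i k + e'' (i + 1) k

/-- The subspace `G` spanned by all the `e_{ik}`. -/
def G (K : Type*) [Field K] (n m : ℕ) (lam : K) : Submodule K (V K n m) :=
  Submodule.span K (Set.range fun p : ZMod n × Fin m => eVec lam p.1 p.2)

/-- The subspace `W` spanned by `{e'_{ik}, e''_{ik} : d_i > 0}` together with
`{e'_{ik} + e''_{ik} : d_i = 0}`. -/
def W (K : Type*) [Field K] (n m : ℕ) (d : ZMod n → ℤ) : Submodule K (V K n m) :=
  Submodule.span K
    ({v | ∃ (i : ZMod n) (k : Fin m), 0 < d i ∧ (v = e' i k ∨ v = e'' i k)} ∪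
     {v | ∃ (i : ZMod n) (k : Fin m), d i = 0 ∧ v = e' i k + e'' i k})


/-! ### Auxiliary development -/

section Aux

variable {K : Type*} [Field K] {n m : ℕ}

/-- Basis vector of the "second-coordinate" model space `ZMod n × Fin m → K`. -/
def sgl (j : ZMod n) (k : Fin m) : ZMod n × Fin m → K := Pi.single (j, k) 1

lemma sgl_apply (j : ZMod n) (k : Fin m) (p : ZMod n × Fin m) :
    sgl (K := K) j k p = if p = (j, k) then 1 else 0 := Pi.single_apply _ _ _

/-- The twisted cyclic shift operator. -/
def Tmap (lam : K) : (ZMod n × Fin m → K) →ₗ[K] (ZMod n × Fin m → K) where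
  toFun x p :=
    if p.1 = 1 then
      lam * x (0, p.2) +
        (if h : (p.2 : ℕ) + 1 < m then x (0, ⟨(p.2 : ℕ) + 1, h⟩) else 0)
    else x (p.1 - 1, p.2)
  map_add' x y := by
    funext p; simp only [Pi.add_apply]; split_ifs <;> ring
  map_smul' c x := by
    funext p; simp only [Pi.smul_apply, smul_eq_mul, RingHom.id_apply]
    split_ifs <;> ring

lemma Tmap_apply (lam : K) (x : ZMod n × Fin m → K) (p : ZMod n × Fin m) :
    Tmap lam x p =
      if p.1 = 1 then
        lam * x (0, p.2) +
          (if h : (p.2 : ℕ) + 1 < m then x (0, ⟨(p.2 : ℕ) + 1, h⟩) else 0)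
      else x (p.1 - 1, p.2) := rfl

lemma Tmap_sgl_ne (lam : K) {i : ZMod n} (hi : i ≠ 0) (k : Fin m) :
    Tmap lam (sgl i k) = sgl (i + 1) k := by
  funext p
  rcases p with ⟨j, k'⟩
  rw [Tmap_apply]
  by_cases hj : j = 1
  · subst hj
    rw [if_pos rfl]
    have e0 : ∀ k'' : Fin m, sgl (K := K) i k (0, k'') = 0 := by
      intro k''; rw [sgl_apply, if_neg]
      simp only [Prod.mk.injEq, not_and]; intro h; exact absurd h.symm hi
    rw [e0, sgl_apply, if_neg]
    · split_ifs <;> simp [e0]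
    · simp only [Prod.mk.injEq, not_and]; intro h
      exact absurd (by rwa [eq_comm, ← sub_eq_zero, add_sub_cancel_right] at h) hi
  · rw [if_neg hj, sgl_apply, sgl_apply]
    congr 1
    simp only [Prod.mk.injEq, eq_iff_iff]
    constructor
    · rintro ⟨h1', h2⟩; exact ⟨by rw [← h1']; ring, h2⟩
    · rintro ⟨h1', h2⟩; exact ⟨by rw [h1']; ring, h2⟩

lemma Tmap_sgl_zero (lam : K) (k : Fin m) :
    Tmap lam (sgl (0 : ZMod n) k) =
      lam • sgl (1 : ZMod n) k +
        (if (k : ℕ) = 0 then 0 else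
          sgl (1 : ZMod n) ⟨(k : ℕ) - 1, lt_of_le_of_lt (Nat.sub_le _ _) k.isLt⟩) := by
  funext p
  rcases p with ⟨j, k'⟩
  rw [Tmap_apply]
  by_cases hj : j = 1
  · subst hj
    rw [if_pos rfl]
    have hk1 := k.isLt
    have hk2 := k'.isLt
    simp only [Pi.add_apply, Pi.smul_apply, smul_eq_mul, ite_apply, Pi.zero_apply, sgl_apply,
      Prod.mk.injEq, true_and, Fin.ext_iff]
    split_ifs <;> (try omega) <;> (try ring) <;> simp_all <;> (try ring) <;> omega
  · rw [if_neg hj]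
    have hj0 : j - 1 ≠ 0 := fun h => hj (by rwa [sub_eq_zero] at h)
    rw [sgl_apply, if_neg]
    · simp only [Pi.add_apply, Pi.smul_apply, smul_eq_mul, ite_apply, Pi.zero_apply, sgl_apply]
      rw [if_neg (by simp only [Prod.mk.injEq, not_and]; intro h; exact absurd h hj)]
      rw [mul_zero, zero_add]
      split_ifs with h1 h2
      · rfl
      · exact absurd (Prod.ext_iff.1 h2).1 hj
      · rfl
    · simp only [Prod.mk.injEq, not_and]; intro h; exact absurd h hj0

/-- The projection `V → (ZMod n × Fin m → K)` whose kernel is `G`. -/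
def psi (lam : K) : V K n m →ₗ[K] (ZMod n × Fin m → K) :=
  LinearMap.funLeft K K Sum.inr - (Tmap lam).comp (LinearMap.funLeft K K Sum.inl)

lemma psi_apply (lam : K) (v : V K n m) :
    psi lam v = (fun p => v (Sum.inr p)) - Tmap lam (fun p => v (Sum.inl p)) := rfl

lemma e'_inl (i : ZMod n) (k : Fin m) :
    (fun p : ZMod n × Fin m => e' (K := K) i k (Sum.inl p)) = sgl i k := by
  funext p; simp [e', sgl, Pi.single_apply]

lemma e'_inr (i : ZMod n) (k : Fin m) :
    (fun p : ZMod n × Fin m => e' (K := K) i k (Sum.inr p)) = 0 := by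
  funext p; simp [e', Pi.single_apply]

lemma e''_inr (i : ZMod n) (k : Fin m) :
    (fun p : ZMod n × Fin m => e'' (K := K) i k (Sum.inr p)) = sgl i k := by
  funext p; simp [e'', sgl, Pi.single_apply]

lemma e''_inl (i : ZMod n) (k : Fin m) :
    (fun p : ZMod n × Fin m => e'' (K := K) i k (Sum.inl p)) = 0 := by
  funext p; simp [e'', Pi.single_apply]

lemma psi_e'' (lam : K) (i : ZMod n) (k : Fin m) :
    psi lam (e'' (n := n) (m := m) i k) = sgl i k := by
  rw [psi_apply, e''_inr, e''_inl, map_zero, sub_zero]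

lemma psi_e' (lam : K) (i : ZMod n) (k : Fin m) :
    psi lam (e' (n := n) (m := m) i k) = -(Tmap lam (sgl i k)) := by
  rw [psi_apply, e'_inr, e'_inl, zero_sub]

lemma psi_eVec (lam : K) (i : ZMod n) (k : Fin m) :
    psi lam (eVec (n := n) (m := m) lam i k) = 0 := by
  by_cases hi : i = 0
  · subst hi
    rw [eVec, if_pos rfl, map_add, map_add, map_smul, psi_e', psi_e'',
      apply_ite (psi lam), map_zero, psi_e'', Tmap_sgl_zero]
    abel
  · rw [eVec, if_neg hi, map_add, psi_e', psi_e'', Tmap_sgl_ne lam hi]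
    abel

section NZ

variable [NeZero n]

lemma psi_surj (lam : K) : LinearMap.range (psi (n := n) (m := m) lam) = ⊤ := by
  rw [LinearMap.range_eq_top]
  intro y
  refine ⟨Sum.elim 0 y, ?_⟩
  rw [psi_apply]
  have h1 : (fun p : ZMod n × Fin m => Sum.elim (0 : ZMod n × Fin m → K) y (Sum.inl p)) =
      (0 : ZMod n × Fin m → K) := rfl
  have h2 : (fun p : ZMod n × Fin m => Sum.elim (0 : ZMod n × Fin m → K) y (Sum.inr p)) = y := rfl
  rw [h1, h2, map_zero, sub_zero]

lemma finrank_ker_psi (lam : K) :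
    Module.finrank K (LinearMap.ker (psi (n := n) (m := m) lam)) = n * m := by
  have h := LinearMap.finrank_range_add_finrank_ker (psi (n := n) (m := m) lam)
  rw [psi_surj, finrank_top, Module.finrank_fintype_fun_eq_card,
    Module.finrank_fintype_fun_eq_card] at h
  simp only [Fintype.card_sum, Fintype.card_prod, ZMod.card, Fintype.card_fin] at h
  omega

lemma li_eVec (lam : K) :
    LinearIndependent K (fun p : ZMod n × Fin m => eVec (n := n) (m := m) lam p.1 p.2) := by
  apply LinearIndependent.of_comp (LinearMap.funLeft K K Sum.inl)
  have he : ((LinearMap.funLeft K K Sum.inl) ∘ fun p : ZMod n × Fin m => eVec lam p.1 p.2) =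
      fun p : ZMod n × Fin m => (Pi.single p 1 : ZMod n × Fin m → K) := by
    funext p q
    rcases p with ⟨i, kk⟩
    simp only [Function.comp_apply, LinearMap.funLeft_apply]
    by_cases hi : i = 0
    · subst hi
      rw [eVec, if_pos rfl]
      simp only [Pi.add_apply, Pi.smul_apply, smul_eq_mul, ite_apply, Pi.zero_apply]
      have h1 := congrFun (e'_inl (K := K) (0 : ZMod n) kk) q
      have h2 := congrFun (e''_inl (K := K) (1 : ZMod n) kk) q
      have h3 := congrFun (e''_inl (K := K) (1 : ZMod n)
        ⟨(kk : ℕ) - 1, lt_of_le_of_lt (Nat.sub_le _ _) kk.isLt⟩) q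
      rw [h1, h2, h3]
      simp only [Pi.zero_apply, mul_zero, add_zero, ite_self]
      rw [sgl_apply]
      split_ifs with hq <;> simp [Pi.single_apply, hq]
    · rw [eVec, if_neg hi]
      simp only [Pi.add_apply]
      have h1 := congrFun (e'_inl (K := K) i kk) q
      have h2 := congrFun (e''_inl (K := K) (i + 1) kk) q
      rw [h1, h2]
      simp only [Pi.zero_apply, add_zero]
      rw [sgl_apply, Pi.single_apply]
  rw [he]
  have hb : (fun p : ZMod n × Fin m => (Pi.single p 1 : ZMod n × Fin m → K)) =
      ⇑(Pi.basisFun K (ZMod n × Fin m)) := by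
    funext p; rw [Pi.basisFun_apply]
  rw [hb]
  exact (Pi.basisFun K (ZMod n × Fin m)).linearIndependent

lemma finrank_G (lam : K) : Module.finrank K (G K n m lam) = n * m := by
  rw [G, finrank_span_eq_card (li_eVec (n := n) (m := m) lam)]
  simp [Fintype.card_prod, ZMod.card]

lemma G_le_ker (lam : K) : G K n m lam ≤ LinearMap.ker (psi (n := n) (m := m) lam) := by
  rw [G, Submodule.span_le]
  rintro v ⟨p, rfl⟩
  exact LinearMap.mem_ker.2 (psi_eVec lam p.1 p.2)

lemma G_eq_ker (lam : K) : G K n m lam = LinearMap.ker (psi (n := n) (m := m) lam) :=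
  Submodule.eq_of_le_of_finrank_le (G_le_ker lam)
    (by rw [finrank_ker_psi (n := n) (m := m) lam, finrank_G (n := n) (m := m) lam])

set_option synthInstance.maxHeartbeats 1000000 in
set_option maxHeartbeats 1000000 in
lemma key (lam : K) (d : ZMod n → ℤ) :
    Module.finrank K ↥(W K n m d ⊔ G K n m lam) =
      Module.finrank K ((W K n m d).map (psi lam)) + n * m := by
  have h := LinearMap.finrank_range_add_finrank_ker
    ((psi (n := n) (m := m) lam).comp (Submodule.subtype (W K n m d ⊔ G K n m lam)))
  rw [LinearMap.range_comp, Submodule.range_subtype, LinearMap.ker_comp] at h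
  have hle : LinearMap.ker (psi (n := n) (m := m) lam) ≤ W K n m d ⊔ G K n m lam := by
    rw [← G_eq_ker]; exact le_sup_right
  have e2 : Module.finrank K ↥(Submodule.comap (W K n m d ⊔ G K n m lam).subtype
      (LinearMap.ker (psi (n := n) (m := m) lam))) = n * m := by
    rw [(Submodule.comapSubtypeEquivOfLe hle).finrank_eq, finrank_ker_psi]
  rw [e2] at h
  have hmap : (W K n m d ⊔ G K n m lam).map (psi lam) = (W K n m d).map (psi lam) := by
    rw [Submodule.map_sup]
    have hbot : (G K n m lam).map (psi lam) = ⊥ := by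
      rw [← le_bot_iff, Submodule.map_le_iff_le_comap]
      intro x hx
      simp only [Submodule.mem_comap, Submodule.mem_bot]
      exact G_le_ker lam hx
    rw [hbot, sup_bot_eq]
  rw [hmap] at h
  exact h.symm

lemma fin_desc {mu : K} (hmu : mu ≠ 0) (c : Fin m → K)
    (h : ∀ k : Fin m, mu * c k + (if h : (k : ℕ) + 1 < m then c ⟨(k : ℕ) + 1, h⟩ else 0) = 0) :
    ∀ k, c k = 0 := by
  suffices H : ∀ j : ℕ, ∀ k : Fin m, m ≤ (k : ℕ) + j + 1 → c k = 0 by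
    intro k; exact H m k (by have := k.isLt; omega)
  intro j
  induction j with
  | zero =>
    intro k hk
    have h1 := h k
    rw [dif_neg (by omega), add_zero] at h1
    rcases mul_eq_zero.1 h1 with h2 | h2
    · exact absurd h2 hmu
    · exact h2
  | succ j ih =>
    intro k hk
    by_cases hlt : (k : ℕ) + 1 < m
    · have h2 := ih ⟨(k : ℕ) + 1, hlt⟩ (by simp; omega)
      have h1 := h k
      rw [dif_pos hlt, h2, add_zero] at h1
      rcases mul_eq_zero.1 h1 with h3 | h3
      · exact absurd h3 hmu
      · exact h3
    · have h1 := h k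
      rw [dif_neg hlt, add_zero] at h1
      rcases mul_eq_zero.1 h1 with h3 | h3
      · exact absurd h3 hmu
      · exact h3

/-- The coordinate block subspace. -/
def Bblk (j : ZMod n) : Submodule K (ZMod n × Fin m → K) :=
  Submodule.span K (Set.range fun k : Fin m => sgl j k)

/-- Generators of the image of `W` under `psi`. -/
def GS (lam : K) (d : ZMod n → ℤ) : Set (ZMod n × Fin m → K) :=
  {v | ∃ (i : ZMod n) (k : Fin m), 0 < d i ∧ (v = sgl i k ∨ v = Tmap lam (sgl i k))} ∪
    {v | ∃ (i : ZMod n) (k : Fin m), d i = 0 ∧ v = sgl i k - Tmap lam (sgl i k)}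

def WU (lam : K) (d : ZMod n → ℤ) : Submodule K (ZMod n × Fin m → K) :=
  Submodule.span K (GS lam d)

lemma map_W_eq (lam : K) (d : ZMod n → ℤ) :
    (W K n m d).map (psi lam) = WU lam d := by
  rw [W, Submodule.map_span]
  apply le_antisymm
  · rw [Submodule.span_le]
    rintro y ⟨v, hv, rfl⟩
    rcases hv with ⟨i, k, hd, hv⟩ | ⟨i, k, hd, rfl⟩
    · rcases hv with rfl | rfl
      · rw [psi_e']
        exact neg_mem (Submodule.subset_span (Or.inl ⟨i, k, hd, Or.inr rfl⟩))
      · rw [psi_e'']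
        exact Submodule.subset_span (Or.inl ⟨i, k, hd, Or.inl rfl⟩)
    · rw [map_add, psi_e', psi_e'', neg_add_eq_sub]
      exact Submodule.subset_span (Or.inr ⟨i, k, hd, rfl⟩)
  · rw [WU, GS, Submodule.span_le]
    rintro y (⟨i, k, hd, hv⟩ | ⟨i, k, hd, rfl⟩)
    · rcases hv with rfl | rfl
      · exact Submodule.subset_span ⟨e'' i k, Or.inl ⟨i, k, hd, Or.inr rfl⟩, psi_e'' lam i k⟩
      · have hTe : Tmap lam (sgl i k) = -(psi lam (e' (n := n) (m := m) i k)) := by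
          rw [psi_e', neg_neg]
        rw [hTe]
        exact neg_mem (Submodule.subset_span ⟨e' i k, Or.inl ⟨i, k, hd, Or.inl rfl⟩, rfl⟩)
    · have hde : sgl (K := K) i k - Tmap lam (sgl i k) = psi lam (e' i k + e'' i k) := by
        rw [map_add, psi_e', psi_e'', neg_add_eq_sub]
      rw [hde]
      exact Submodule.subset_span ⟨e' i k + e'' i k, Or.inr ⟨i, k, hd, rfl⟩, rfl⟩

lemma mem_Bblk (j : ZMod n) (k : Fin m) : sgl (K := K) j k ∈ Bblk j :=
  Submodule.subset_span ⟨k, rfl⟩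

lemma Tsgl_mem_Bblk (lam : K) (i : ZMod n) (k : Fin m) :
    Tmap lam (sgl i k) ∈ Bblk (K := K) (i + 1) := by
  by_cases hi : i = 0
  · subst hi
    rw [Tmap_sgl_zero, zero_add]
    refine add_mem (Submodule.smul_mem _ _ (mem_Bblk 1 k)) ?_
    split_ifs
    · exact zero_mem _
    · exact mem_Bblk 1 _
  · rw [Tmap_sgl_ne lam hi]
    exact mem_Bblk _ _

lemma Bblk_le_span_Tsgl (lam : K) (hlam : lam ≠ 0) (i : ZMod n) :
    Bblk (K := K) (i + 1) ≤
      Submodule.span K (Set.range fun k : Fin m => Tmap lam (sgl i k)) := by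
  by_cases hi : i = 0
  · subst hi
    rw [Bblk, Submodule.span_le]
    rintro y ⟨k, rfl⟩
    simp only [zero_add]
    suffices H : ∀ N : ℕ, ∀ k : Fin m, (k : ℕ) ≤ N →
        sgl (K := K) (1 : ZMod n) k ∈
          Submodule.span K (Set.range fun k : Fin m => Tmap lam (sgl (0 : ZMod n) k)) from
      H (k : ℕ) k le_rfl
    intro N
    induction N with
    | zero =>
      intro k hk
      have hk0 : (k : ℕ) = 0 := by omega
      have heq : sgl (K := K) (1 : ZMod n) k = lam⁻¹ • Tmap lam (sgl (0 : ZMod n) k) := by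
        rw [Tmap_sgl_zero, if_pos hk0, add_zero, smul_smul, inv_mul_cancel₀ hlam, one_smul]
      rw [heq]
      exact Submodule.smul_mem _ _ (Submodule.subset_span ⟨k, rfl⟩)
    | succ N ih =>
      intro k hk
      by_cases hk0 : (k : ℕ) = 0
      · have heq : sgl (K := K) (1 : ZMod n) k = lam⁻¹ • Tmap lam (sgl (0 : ZMod n) k) := by
          rw [Tmap_sgl_zero, if_pos hk0, add_zero, smul_smul, inv_mul_cancel₀ hlam, one_smul]
        rw [heq]
        exact Submodule.smul_mem _ _ (Submodule.subset_span ⟨k, rfl⟩)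
      · have heq : sgl (K := K) (1 : ZMod n) k =
            lam⁻¹ • (Tmap lam (sgl (0 : ZMod n) k) -
              sgl 1 ⟨(k : ℕ) - 1, lt_of_le_of_lt (Nat.sub_le _ _) k.isLt⟩) := by
          rw [Tmap_sgl_zero, if_neg hk0, add_sub_cancel_right, smul_smul,
            inv_mul_cancel₀ hlam, one_smul]
        rw [heq]
        exact Submodule.smul_mem _ _ (sub_mem (Submodule.subset_span ⟨k, rfl⟩)
          (ih _ (by simp; omega)))
  · rw [Bblk, Submodule.span_le]
    rintro y ⟨k, rfl⟩
    exact Submodule.subset_span ⟨k, Tmap_sgl_ne lam hi k⟩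

lemma Bpos1 (lam : K) {d : ZMod n → ℤ} {i : ZMod n} (hd : 0 < d i) :
    Bblk (K := K) (m := m) i ≤ WU lam d := by
  rw [Bblk, Submodule.span_le]
  rintro y ⟨k, rfl⟩
  exact Submodule.subset_span (Or.inl ⟨i, k, hd, Or.inl rfl⟩)

lemma Bpos2 (lam : K) (hlam : lam ≠ 0) {d : ZMod n → ℤ} {i : ZMod n} (hd : 0 < d i) :
    Bblk (K := K) (m := m) (i + 1) ≤ WU lam d := by
  refine le_trans (Bblk_le_span_Tsgl lam hlam i) ?_
  rw [Submodule.span_le]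
  rintro y ⟨k, rfl⟩
  exact Submodule.subset_span (Or.inl ⟨i, k, hd, Or.inr rfl⟩)

lemma P1 (lam : K) {d : ZMod n → ℤ} {i : ZMod n} (hd : d i = 0)
    (h : Bblk (K := K) (m := m) (i + 1) ≤ WU lam d) : Bblk (K := K) (m := m) i ≤ WU lam d := by
  rw [Bblk, Submodule.span_le]
  rintro y ⟨k, rfl⟩
  have h1 : sgl (K := K) i k = (sgl i k - Tmap lam (sgl i k)) + Tmap lam (sgl i k) := by abel
  have h2 : (sgl i k - Tmap lam (sgl i k)) + Tmap lam (sgl i k) ∈ WU lam d :=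
    add_mem (Submodule.subset_span (Or.inr ⟨i, k, hd, rfl⟩)) (h (Tsgl_mem_Bblk lam i k))
  rw [← h1] at h2
  exact h2

lemma P2 (lam : K) (hlam : lam ≠ 0) {d : ZMod n → ℤ} {i : ZMod n} (hd : d i = 0)
    (h : Bblk (K := K) (m := m) i ≤ WU lam d) :
    Bblk (K := K) (m := m) (i + 1) ≤ WU lam d := by
  refine le_trans (Bblk_le_span_Tsgl lam hlam i) ?_
  rw [Submodule.span_le]
  rintro y ⟨k, rfl⟩
  have h1 : Tmap lam (sgl (K := K) i k) = sgl i k - (sgl i k - Tmap lam (sgl i k)) := by abel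
  have h2 : sgl i k - (sgl i k - Tmap lam (sgl i k)) ∈ WU lam d :=
    sub_mem (h (mem_Bblk i k)) (Submodule.subset_span (Or.inr ⟨i, k, hd, rfl⟩))
  rw [← h1] at h2
  exact h2

lemma Tmap_sgl_apply_ne (lam : K) {i : ZMod n} {p : ZMod n × Fin m}
    (h : p.1 ≠ i + 1) (k : Fin m) : Tmap lam (sgl i k) p = 0 := by
  by_cases hi : i = 0
  · subst hi
    rw [zero_add] at h
    rw [Tmap_sgl_zero]
    simp only [Pi.add_apply, Pi.smul_apply, smul_eq_mul, ite_apply, Pi.zero_apply]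
    have hz : ∀ k'' : Fin m, sgl (K := K) (1 : ZMod n) k'' p = 0 := by
      intro k''
      rw [sgl_apply, if_neg]
      intro hq; exact h (by rw [hq])
    rw [hz k, mul_zero, zero_add]
    split_ifs
    · rfl
    · exact hz _
  · rw [Tmap_sgl_ne lam hi, sgl_apply, if_neg]
    intro hq; exact h (by rw [hq])

lemma T_coeff_zero (lam : K) (hlam : lam ≠ 0) (i : ZMod n) (c : Fin m → K)
    (h : ∀ k' : Fin m, ∑ k : Fin m, c k * Tmap lam (sgl i k) (i + 1, k') = 0) :
    ∀ k, c k = 0 := by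
  by_cases hi : i = 0
  · subst hi
    simp only [zero_add] at h
    refine fin_desc hlam c fun k' => ?_
    have e1 : ∀ k : Fin m, Tmap lam (sgl (0 : ZMod n) k) ((1 : ZMod n), k') =
        (if (k' : ℕ) = (k : ℕ) then lam else 0) +
          (if (k' : ℕ) + 1 = (k : ℕ) then 1 else 0) := by
      intro k
      have hk := k.isLt
      have hk' := k'.isLt
      rw [Tmap_sgl_zero]
      simp only [Pi.add_apply, Pi.smul_apply, smul_eq_mul, ite_apply, Pi.zero_apply, sgl_apply,
        Prod.mk.injEq, Fin.ext_iff, true_and]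
      split_ifs <;> first | ring1 | omega | (exfalso; omega)
    have h2 := h k'
    have e2 : (∑ k : Fin m, c k * Tmap lam (sgl (0 : ZMod n) k) ((1 : ZMod n), k')) =
        lam * c k' + (if hb : (k' : ℕ) + 1 < m then c ⟨(k' : ℕ) + 1, hb⟩ else 0) := by
      rw [Finset.sum_congr rfl (fun k _ => by rw [e1 k, mul_add])]
      rw [Finset.sum_add_distrib]
      congr 1
      · have e3 : ∀ k : Fin m, (c k * if (k' : ℕ) = (k : ℕ) then lam else 0) =
            if k' = k then c k * lam else 0 := by
          intro k
          simp only [mul_ite, mul_zero, Fin.ext_iff]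
        rw [Finset.sum_congr rfl (fun k _ => e3 k)]
        rw [Finset.sum_ite_eq Finset.univ k' (fun k => c k * lam),
          if_pos (Finset.mem_univ k')]
        ring
      · by_cases hb : (k' : ℕ) + 1 < m
        · rw [dif_pos hb]
          have e3 : ∀ k : Fin m, (c k * if (k' : ℕ) + 1 = (k : ℕ) then 1 else 0) =
              if (⟨(k' : ℕ) + 1, hb⟩ : Fin m) = k then c k else 0 := by
            intro k
            simp only [mul_ite, mul_one, mul_zero, Fin.ext_iff]
          rw [Finset.sum_congr rfl (fun k _ => e3 k)]
          rw [Finset.sum_ite_eq Finset.univ (⟨(k' : ℕ) + 1, hb⟩ : Fin m) c,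
            if_pos (Finset.mem_univ _)]
        · rw [dif_neg hb]
          apply Finset.sum_eq_zero
          intro k _
          rw [if_neg (by have := k.isLt; omega), mul_zero]
    rw [e2] at h2
    exact h2
  · have e1 : ∀ k' k : Fin m, Tmap lam (sgl i k) (i + 1, k') = if k' = k then 1 else 0 := by
      intro k' k
      rw [Tmap_sgl_ne lam hi, sgl_apply]
      simp [Prod.ext_iff]
    intro k
    have h2 := h k
    rw [Finset.sum_congr rfl (fun kk _ => by rw [e1 k kk])] at h2
    simp only [mul_ite, mul_one, mul_zero] at h2
    rwa [Finset.sum_ite_eq Finset.univ k c, if_pos (Finset.mem_univ k)] at h2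

/-- There is a positive entry ahead of `j` (inclusive), with only zeros in between. -/
def posA (d : ZMod n → ℤ) (j : ZMod n) : Prop :=
  ∃ t : ℕ, t < n ∧ 0 < d (j + (t : ZMod n)) ∧ ∀ u : ℕ, u < t → d (j + (u : ZMod n)) = 0

/-- There is a positive entry behind `j` (inclusive), with only zeros in between. -/
def posB (d : ZMod n → ℤ) (j : ZMod n) : Prop :=
  ∃ t : ℕ, t < n ∧ 0 < d (j - (t : ZMod n)) ∧ ∀ u : ℕ, u < t → d (j - (u : ZMod n)) = 0

/-- `j` belongs to a run (maximal cyclic block of non-negative entries) containing a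
positive entry. -/
def inR (d : ZMod n → ℤ) (j : ZMod n) : Prop := 0 ≤ d j ∧ (posA d j ∨ posB d j)

lemma npos : 0 < n := Nat.pos_of_ne_zero (NeZero.ne n)

lemma cast_succ_eq (j : ZMod n) (t : ℕ) : j + ((t + 1 : ℕ) : ZMod n) = j + 1 + (t : ZMod n) := by
  push_cast; ring

lemma cast_pred_eq (j : ZMod n) (t : ℕ) : j - ((t + 1 : ℕ) : ZMod n) = j - 1 - (t : ZMod n) := by
  push_cast; ring

lemma posA_of_pos {d : ZMod n → ℤ} {j : ZMod n} (h : 0 < d j) : posA d j :=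
  ⟨0, npos, by simpa using h, fun u hu => absurd hu (Nat.not_lt_zero u)⟩

lemma inR_of_pos {d : ZMod n → ℤ} {j : ZMod n} (h : 0 < d j) : inR d j :=
  ⟨le_of_lt h, Or.inl (posA_of_pos h)⟩

lemma one_lt_n_of_ne {j : ZMod n} (h : j + 1 ≠ j) : 1 < n := by
  by_contra hle
  have h1 : n = 1 := by have := npos (n := n); omega
  subst h1
  exact h (Subsingleton.elim _ _)

lemma inR_succ {d : ZMod n → ℤ} {j : ZMod n} (hj : inR d j) (h1 : 0 ≤ d (j + 1)) :
    inR d (j + 1) := by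
  refine ⟨h1, ?_⟩
  by_cases hd1 : 0 < d (j + 1)
  · exact Or.inl (posA_of_pos hd1)
  have hz1 : d (j + 1) = 0 := by omega
  rcases hj.2 with ⟨t, htn, hpos, hz⟩ | ⟨t, htn, hpos, hz⟩
  · rcases Nat.eq_zero_or_pos t with rfl | ht0
    · have hdj : 0 < d j := by simpa using hpos
      have hn1 : 1 < n := by
        refine one_lt_n_of_ne (j := j) fun hEq => ?_
        rw [hEq] at hz1; omega
      refine Or.inr ⟨1, hn1, ?_, ?_⟩
      · have e : j + 1 - ((1 : ℕ) : ZMod n) = j := by push_cast; ring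
        rw [e]; exact hdj
      · intro u hu
        have : u = 0 := by omega
        subst this
        simpa using hz1
    · refine Or.inl ⟨t - 1, by omega, ?_, ?_⟩
      · have e : j + 1 + ((t - 1 : ℕ) : ZMod n) = j + (t : ZMod n) := by
          rw [← cast_succ_eq, show t - 1 + 1 = t from by omega]
        rw [e]; exact hpos
      · intro u hu
        rw [← cast_succ_eq]
        exact hz _ (by omega)
  · have hne : t + 1 ≠ n := by
      intro hEq
      have he : j - (t : ZMod n) = j + 1 := by
        have h2 : ((t + 1 : ℕ) : ZMod n) = 0 := by rw [hEq]; exact ZMod.natCast_self n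
        push_cast at h2
        have h3 : (t : ZMod n) = -1 := eq_neg_of_add_eq_zero_left h2
        rw [h3]; ring
      rw [he] at hpos; omega
    refine Or.inr ⟨t + 1, by omega, ?_, ?_⟩
    · rw [show j + 1 - ((t + 1 : ℕ) : ZMod n) = j - (t : ZMod n) from by push_cast; ring]
      exact hpos
    · intro u hu
      rcases Nat.eq_zero_or_pos u with rfl | hu0
      · simpa using hz1
      · rw [show j + 1 - (u : ZMod n) = j - ((u - 1 : ℕ) : ZMod n) from by
          have e2 : (u : ℕ) = (u - 1) + 1 := by omega
          rw [e2]; push_cast; ring]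
        exact hz _ (by omega)

lemma inR_pred {d : ZMod n → ℤ} {j : ZMod n} (h0 : 0 ≤ d j) (h : inR d (j + 1)) :
    inR d j := by
  refine ⟨h0, ?_⟩
  by_cases hdj : 0 < d j
  · exact Or.inl (posA_of_pos hdj)
  have hz0 : d j = 0 := by omega
  rcases h.2 with ⟨t, htn, hpos, hz⟩ | ⟨t, htn, hpos, hz⟩
  · have hne : t + 1 ≠ n := by
      intro hEq
      have h2 : ((t + 1 : ℕ) : ZMod n) = 0 := by rw [hEq]; exact ZMod.natCast_self n
      push_cast at h2
      have h3 : (t : ZMod n) + 1 = 0 := by linear_combination h2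
      have he : j + 1 + (t : ZMod n) = j := by
        rw [show j + 1 + (t : ZMod n) = j + ((t : ZMod n) + 1) from by ring, h3, add_zero]
      rw [he] at hpos; omega
    refine Or.inl ⟨t + 1, by omega, ?_, ?_⟩
    · rw [cast_succ_eq]; exact hpos
    · intro u hu
      rcases Nat.eq_zero_or_pos u with rfl | hu0
      · simpa using hz0
      · rw [show (u : ℕ) = (u - 1) + 1 from by omega, cast_succ_eq]
        exact hz _ (by omega)
  · rcases Nat.eq_zero_or_pos t with rfl | ht0
    · have hd1 : 0 < d (j + 1) := by simpa using hpos
      have hn1 : 1 < n := by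
        refine one_lt_n_of_ne (j := j) fun hEq => ?_
        rw [hEq] at hd1; omega
      refine Or.inl ⟨1, hn1, ?_, ?_⟩
      · rw [show j + ((1 : ℕ) : ZMod n) = j + 1 from by push_cast; ring]
        exact hd1
      · intro u hu
        have : u = 0 := by omega
        subst this
        simpa using hz0
    · refine Or.inr ⟨t - 1, by omega, ?_, ?_⟩
      · rw [show j - ((t - 1 : ℕ) : ZMod n) = j + 1 - (t : ZMod n) from by
          rw [show (t : ℕ) = (t - 1) + 1 from by omega, cast_pred_eq,
            show j + 1 - 1 = j from by ring, show t - 1 + 1 - 1 = t - 1 from by omega]]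
        exact hpos
      · intro u hu
        rw [show j - (u : ZMod n) = j + 1 - ((u + 1 : ℕ) : ZMod n) from by
          rw [cast_pred_eq, show j + 1 - 1 = j from by ring]]
        exact hz _ (by omega)

/-- The set of "full" blocks. -/
def Fset (d : ZMod n → ℤ) : Finset (ZMod n) :=
  Finset.univ.filter fun j => inR d j ∨ inR d (j - 1)

/-- The set of members of all-zero runs. -/
def Zset (d : ZMod n → ℤ) : Finset (ZMod n) :=
  Finset.univ.filter fun i => d i = 0 ∧ ¬posA d i ∧ ¬posB d i

lemma mem_Fset {d : ZMod n → ℤ} {j : ZMod n} :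
    j ∈ Fset d ↔ inR d j ∨ inR d (j - 1) := by
  rw [Fset, Finset.mem_filter]; simp

lemma mem_Zset {d : ZMod n → ℤ} {i : ZMod n} :
    i ∈ Zset d ↔ d i = 0 ∧ ¬posA d i ∧ ¬posB d i := by
  rw [Zset, Finset.mem_filter]; simp

lemma Zset_not_inR {d : ZMod n → ℤ} {i : ZMod n} (hi : i ∈ Zset d) : ¬inR d i := by
  rw [mem_Zset] at hi
  rintro ⟨-, h | h⟩
  · exact hi.2.1 h
  · exact hi.2.2 h

lemma Zset_not_F {d : ZMod n → ℤ} {i : ZMod n} (hi : i ∈ Zset d) : i ∉ Fset d := by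
  rw [mem_Fset]
  rintro (h | h)
  · exact Zset_not_inR hi h
  · have h2 : inR d (i - 1 + 1) :=
      inR_succ h (by rw [sub_add_cancel]; exact le_of_eq (mem_Zset.1 hi).1.symm)
    rw [sub_add_cancel] at h2
    exact Zset_not_inR hi h2

lemma Zset_succ_not_F {d : ZMod n → ℤ} {i : ZMod n} (hi : i ∈ Zset d) : i + 1 ∉ Fset d := by
  rw [mem_Fset]
  rintro (h | h)
  · exact Zset_not_inR hi (inR_pred (le_of_eq (mem_Zset.1 hi).1.symm) h)
  · rw [add_sub_cancel_right] at h
    exact Zset_not_inR hi h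

lemma inR_mem_F {d : ZMod n → ℤ} {i : ZMod n} (h : inR d i) : i ∈ Fset d :=
  mem_Fset.2 (Or.inl h)

lemma inR_succ_mem_F {d : ZMod n → ℤ} {i : ZMod n} (h : inR d i) : i + 1 ∈ Fset d :=
  mem_Fset.2 (Or.inr (by rwa [add_sub_cancel_right]))

lemma runS (lam : K) (hlam : lam ≠ 0) {d : ZMod n → ℤ} :
    ∀ t : ℕ, ∀ j : ZMod n, 0 < d j → (∀ u : ℕ, 1 ≤ u → u ≤ t → d (j + (u : ZMod n)) = 0) →
      Bblk (K := K) (m := m) (j + (t : ZMod n)) ≤ WU lam d ∧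
        Bblk (K := K) (m := m) (j + (t : ZMod n) + 1) ≤ WU lam d := by
  intro t
  induction t with
  | zero =>
    intro j hj _
    constructor
    · rw [show j + ((0 : ℕ) : ZMod n) = j from by push_cast; ring]
      exact Bpos1 lam hj
    · rw [show j + ((0 : ℕ) : ZMod n) + 1 = j + 1 from by push_cast; ring]
      exact Bpos2 lam hlam hj
  | succ t ih =>
    intro j hj hzeros
    have ihp := ih j hj fun u h1 h2 => hzeros u h1 (by omega)
    have hzt : d (j + ((t + 1 : ℕ) : ZMod n)) = 0 := hzeros (t + 1) (by omega) le_rfl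
    rw [cast_succ_eq] at hzt
    have e1 : j + ((t + 1 : ℕ) : ZMod n) = j + (t : ZMod n) + 1 := by push_cast; ring
    constructor
    · rw [e1]; exact ihp.2
    · rw [e1]
      have hzt2 : d (j + (t : ZMod n) + 1) = 0 := by
        rw [show j + (t : ZMod n) + 1 = j + 1 + (t : ZMod n) from by ring]; exact hzt
      exact P2 lam hlam hzt2 ihp.2

lemma runR (lam : K) (hlam : lam ≠ 0) {d : ZMod n → ℤ} :
    ∀ t : ℕ, ∀ j : ZMod n, 0 < d (j + (t : ZMod n)) → (∀ u : ℕ, u < t → d (j + (u : ZMod n)) = 0) →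
      Bblk (K := K) (m := m) j ≤ WU lam d := by
  intro t
  induction t with
  | zero =>
    intro j hp _
    rw [show j + ((0 : ℕ) : ZMod n) = j from by push_cast; ring] at hp
    exact Bpos1 lam hp
  | succ t ih =>
    intro j hp hz
    have h0 : d j = 0 := by
      have := hz 0 (by omega)
      rwa [show j + ((0 : ℕ) : ZMod n) = j from by push_cast; ring] at this
    have hB1 : Bblk (K := K) (m := m) (j + 1) ≤ WU lam d := by
      refine ih (j + 1) ?_ ?_
      · rwa [← cast_succ_eq]
      · intro u hu
        rw [← cast_succ_eq]
        exact hz (u + 1) (by omega)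
    exact P1 lam h0 hB1

lemma B_of_F (lam : K) (hlam : lam ≠ 0) {d : ZMod n → ℤ} {j : ZMod n} (hj : j ∈ Fset d) :
    Bblk (K := K) (m := m) j ≤ WU lam d := by
  rw [mem_Fset] at hj
  rcases hj with hR | hR
  · rcases hR.2 with ⟨t, htn, hpos, hz⟩ | ⟨t, htn, hpos, hz⟩
    · exact runR lam hlam t j hpos hz
    · have hrun := (runS (m := m) lam hlam t (j - (t : ZMod n)) hpos ?_).1
      · rwa [sub_add_cancel] at hrun
      · intro u h1 h2
        rw [show j - (t : ZMod n) + (u : ZMod n) = j - ((t - u : ℕ) : ZMod n) from by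
          rw [Nat.cast_sub h2]; ring]
        exact hz (t - u) (by omega)
  · rcases hR.2 with ⟨t, htn, hpos, hz⟩ | ⟨t, htn, hpos, hz⟩
    · rcases Nat.eq_zero_or_pos t with rfl | ht0
      · have hp : 0 < d (j - 1) := by
          rwa [show j - 1 + ((0 : ℕ) : ZMod n) = j - 1 from by push_cast; ring] at hpos
        have := Bpos2 (m := m) lam hlam hp
        rwa [sub_add_cancel] at this
      · apply runR lam hlam (t - 1) j
        · rw [show j + ((t - 1 : ℕ) : ZMod n) = j - 1 + (t : ZMod n) from by
            rw [show (t : ℕ) = (t - 1) + 1 from by omega, cast_succ_eq,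
              show t - 1 + 1 - 1 = t - 1 from by omega, sub_add_cancel]]
          exact hpos
        · intro u hu
          rw [show j + (u : ZMod n) = j - 1 + ((u + 1 : ℕ) : ZMod n) from by
            rw [cast_succ_eq, sub_add_cancel]]
          exact hz (u + 1) (by omega)
    · have hrun := (runS (m := m) lam hlam t (j - 1 - (t : ZMod n)) hpos ?_).2
      · rwa [sub_add_cancel, sub_add_cancel] at hrun
      · intro u h1 h2
        rw [show j - 1 - (t : ZMod n) + (u : ZMod n) = j - 1 - ((t - u : ℕ) : ZMod n) from by
          rw [Nat.cast_sub h2]; ring]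
        exact hz (t - u) (by omega)

def Cblk (lam : K) (i : ZMod n) : Submodule K (ZMod n × Fin m → K) :=
  Submodule.span K (Set.range fun k : Fin m => sgl i k - Tmap lam (sgl i k))

def Yspace (lam : K) (d : ZMod n → ℤ) : Submodule K (ZMod n × Fin m → K) :=
  (⨆ j ∈ Fset d, Bblk (K := K) (m := m) j) ⊔ (⨆ i ∈ Zset d, Cblk lam i)

lemma B_le_Y (lam : K) {d : ZMod n → ℤ} {j : ZMod n} (hj : j ∈ Fset d) :
    Bblk (K := K) (m := m) j ≤ Yspace lam d :=
  le_trans (le_iSup₂ (f := fun j (_ : j ∈ Fset d) => Bblk (K := K) (m := m) j) j hj) le_sup_left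

lemma C_le_Y (lam : K) {d : ZMod n → ℤ} {i : ZMod n} (hi : i ∈ Zset d) :
    Cblk (K := K) (m := m) lam i ≤ Yspace lam d :=
  le_trans (le_iSup₂ (f := fun i (_ : i ∈ Zset d) => Cblk (K := K) (m := m) lam i) i hi)
    le_sup_right

lemma WU_eq_Y (lam : K) (hlam : lam ≠ 0) (d : ZMod n → ℤ) :
    WU (K := K) (n := n) (m := m) lam d = Yspace lam d := by
  apply le_antisymm
  · rw [WU, Submodule.span_le]
    rintro v (⟨i, k, hd, hv⟩ | ⟨i, k, hd, rfl⟩)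
    · rcases hv with rfl | rfl
      · exact B_le_Y lam (inR_mem_F (inR_of_pos hd)) (mem_Bblk i k)
      · exact B_le_Y lam (inR_succ_mem_F (inR_of_pos hd)) (Tsgl_mem_Bblk lam i k)
    · by_cases hz : posA d i ∨ posB d i
      · have hiR : inR d i := ⟨le_of_eq hd.symm, hz⟩
        exact sub_mem (B_le_Y lam (inR_mem_F hiR) (mem_Bblk i k))
          (B_le_Y lam (inR_succ_mem_F hiR) (Tsgl_mem_Bblk lam i k))
      · push_neg at hz
        exact C_le_Y lam (mem_Zset.2 ⟨hd, hz.1, hz.2⟩) (Submodule.subset_span ⟨k, rfl⟩)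
  · rw [Yspace]
    apply sup_le
    · exact iSup_le fun j => iSup_le fun hj => B_of_F lam hlam hj
    · refine iSup_le fun i => iSup_le fun hi => ?_
      rw [Cblk, Submodule.span_le]
      rintro v ⟨k, rfl⟩
      exact Submodule.subset_span (Or.inr ⟨i, k, (mem_Zset.1 hi).1, rfl⟩)

def famY (lam : K) (d : ZMod n → ℤ) :
    ((↥(Fset d) × Fin m) ⊕ (↥(Zset d) × Fin m)) → (ZMod n × Fin m → K) :=
  Sum.elim (fun q => sgl q.1.1 q.2) fun q => sgl q.1.1 q.2 - Tmap lam (sgl q.1.1 q.2)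

@[simp] lemma famY_inl (lam : K) (d : ZMod n → ℤ) (q : ↥(Fset d) × Fin m) :
    famY (K := K) lam d (Sum.inl q) = sgl q.1.1 q.2 := rfl

@[simp] lemma famY_inr (lam : K) (d : ZMod n → ℤ) (q : ↥(Zset d) × Fin m) :
    famY (K := K) lam d (Sum.inr q) = sgl q.1.1 q.2 - Tmap lam (sgl q.1.1 q.2) := rfl

lemma Y_eq_span_famY (lam : K) (d : ZMod n → ℤ) :
    Yspace (K := K) (n := n) (m := m) lam d = Submodule.span K (Set.range (famY lam d)) := by
  apply le_antisymm
  · apply sup_le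
    · refine iSup_le fun j => iSup_le fun hj => ?_
      rw [Bblk, Submodule.span_le]
      rintro v ⟨k, rfl⟩
      exact Submodule.subset_span ⟨Sum.inl (⟨j, hj⟩, k), rfl⟩
    · refine iSup_le fun i => iSup_le fun hi => ?_
      rw [Cblk, Submodule.span_le]
      rintro v ⟨k, rfl⟩
      exact Submodule.subset_span ⟨Sum.inr (⟨i, hi⟩, k), rfl⟩
  · rw [Submodule.span_le]
    rintro v ⟨q, rfl⟩
    rcases q with ⟨⟨j, hj⟩, k⟩ | ⟨⟨i, hi⟩, k⟩
    · exact B_le_Y lam hj (mem_Bblk j k)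
    · exact C_le_Y lam hi (Submodule.subset_span ⟨k, rfl⟩)

lemma succ_ne_of_neg {d : ZMod n → ℤ} (hneg : ∃ i0, d i0 < 0) {i : ZMod n} (hz : d i = 0) :
    i + 1 ≠ i := by
  intro h
  obtain ⟨i0, h0⟩ := hneg
  have h1 : (1 : ZMod n) = 0 := by
    rw [← add_sub_cancel_left i 1, h, sub_self]
  have e0 : ∀ x : ZMod n, x = 0 := fun x => by rw [← mul_one x, h1, mul_zero]
  have : i0 = i := by rw [e0 i0, e0 i]
  rw [this] at h0
  omega

lemma nuSet_nonempty {d : ZMod n → ℤ} (hneg : ∃ i0, d i0 < 0) (i : ZMod n) :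
    {t : ℕ | 0 < t ∧ (i + (t : ZMod n)) ∉ Zset d}.Nonempty := by
  obtain ⟨i0, h0⟩ := hneg
  have h0nz : i0 ∉ Zset d := fun h => by rw [(mem_Zset.1 h).1] at h0; omega
  by_cases hii : i0 = i
  · refine ⟨n, npos, ?_⟩
    rw [ZMod.natCast_self, add_zero, ← hii]
    exact h0nz
  · refine ⟨(i0 - i).val, ?_, ?_⟩
    · refine Nat.pos_of_ne_zero fun h => (sub_ne_zero.2 hii) ?_
      rw [← ZMod.natCast_zmod_val (i0 - i), h, Nat.cast_zero]
    · have e : i + ((i0 - i).val : ZMod n) = i0 := by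
        rw [ZMod.natCast_zmod_val]; ring
      rw [e]
      exact h0nz

lemma famY_li (lam : K) (hlam : lam ≠ 0) {d : ZMod n → ℤ} (hneg : ∃ i0, d i0 < 0) :
    LinearIndependent K (famY (K := K) (n := n) (m := m) lam d) := by
  rw [Fintype.linearIndependent_iff]
  intro g hg
  have hsum : ∀ p : ZMod n × Fin m,
      (∑ a : ↥(Fset d) × Fin m, g (Sum.inl a) * famY lam d (Sum.inl a) p) +
        (∑ b : ↥(Zset d) × Fin m, g (Sum.inr b) * famY lam d (Sum.inr b) p) = 0 := by
    intro p
    have h1 := congrFun hg p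
    rw [Finset.sum_apply] at h1
    simp only [Pi.smul_apply, smul_eq_mul, Pi.zero_apply] at h1
    rw [Fintype.sum_sum_type] at h1
    exact h1
  have hZcoeff : ∀ N : ℕ, ∀ i : ZMod n, ∀ hi : i ∈ Zset d,
      sInf {t : ℕ | 0 < t ∧ (i + (t : ZMod n)) ∉ Zset d} ≤ N →
      ∀ k : Fin m, g (Sum.inr (⟨i, hi⟩, k)) = 0 := by
    intro N
    induction N with
    | zero =>
      intro i hi hle k
      exfalso
      have hmemS := Nat.sInf_mem (nuSet_nonempty hneg i)
      have h1 : 0 < sInf {t : ℕ | 0 < t ∧ (i + (t : ZMod n)) ∉ Zset d} := hmemS.1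
      omega
    | succ N ih =>
      intro i hi hle k
      have hkey : ∀ k' : Fin m,
          ∑ kk : Fin m, g (Sum.inr (⟨i, hi⟩, kk)) * Tmap lam (sgl i kk) (i + 1, k') = 0 := by
        intro k'
        have hp := hsum (i + 1, k')
        have hF0 : (∑ a : ↥(Fset d) × Fin m,
            g (Sum.inl a) * famY lam d (Sum.inl a) (i + 1, k')) = 0 := by
          apply Finset.sum_eq_zero
          intro a _
          rw [famY_inl, sgl_apply, if_neg, mul_zero]
          intro heq
          have h2 : (i + 1 : ZMod n) = a.1.1 := congrArg Prod.fst heq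
          exact Zset_succ_not_F hi (h2 ▸ a.1.2)
        rw [hF0, zero_add] at hp
        rw [Fintype.sum_prod_type] at hp
        have hsplit : (∑ b : ↥(Zset d), ∑ kk : Fin m,
            g (Sum.inr (b, kk)) * famY lam d (Sum.inr (b, kk)) (i + 1, k')) =
            ∑ kk : Fin m,
              g (Sum.inr (⟨i, hi⟩, kk)) * famY lam d (Sum.inr (⟨i, hi⟩, kk)) (i + 1, k') := by
        -- proof below
          apply Finset.sum_eq_single_of_mem (⟨i, hi⟩ : ↥(Zset d)) (Finset.mem_univ _)
          intro b _ hbne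
          have hb1 : b.1 ≠ i := fun h => hbne (Subtype.ext h)
          by_cases hb2 : b.1 = i + 1
          · apply Finset.sum_eq_zero
            intro kk _
            have hmem : (i + 1) ∈ Zset d := hb2 ▸ b.2
            have hnu : sInf {t : ℕ | 0 < t ∧ ((i + 1) + (t : ZMod n)) ∉ Zset d} ≤ N := by
              have hmemS := Nat.sInf_mem (nuSet_nonempty hneg i)
              have h01 : 0 < sInf {t : ℕ | 0 < t ∧ (i + (t : ZMod n)) ∉ Zset d} := hmemS.1
              have hnu1 : sInf {t : ℕ | 0 < t ∧ (i + (t : ZMod n)) ∉ Zset d} ≠ 1 := by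
                intro h1
                rw [h1] at hmemS
                refine hmemS.2 ?_
                rw [show i + ((1 : ℕ) : ZMod n) = i + 1 from by push_cast; ring]
                exact hmem
              have e3 := cast_succ_eq i (sInf {t : ℕ | 0 < t ∧ (i + (t : ZMod n)) ∉ Zset d} - 1)
              have e4 : (sInf {t : ℕ | 0 < t ∧ (i + (t : ZMod n)) ∉ Zset d} - 1) + 1 =
                  sInf {t : ℕ | 0 < t ∧ (i + (t : ZMod n)) ∉ Zset d} := by omega
              rw [e4] at e3
              have hmem2 : (sInf {t : ℕ | 0 < t ∧ (i + (t : ZMod n)) ∉ Zset d} - 1) ∈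
                  {t : ℕ | 0 < t ∧ ((i + 1) + (t : ZMod n)) ∉ Zset d} := by
                constructor
                · omega
                · rw [← e3]
                  exact hmemS.2
              have hle2 := Nat.sInf_le hmem2
              omega
            have hg0 := ih (i + 1) hmem hnu kk
            have hb : b = ⟨i + 1, hmem⟩ := Subtype.ext hb2
            rw [hb, hg0, zero_mul]
          · apply Finset.sum_eq_zero
            intro kk _
            rw [famY_inr]
            have h1 : sgl (K := K) b.1 kk (i + 1, k') = 0 := by
              rw [sgl_apply, if_neg]
              intro heq
              exact hb2 (congrArg Prod.fst heq).symm
            have h2 : Tmap lam (sgl b.1 kk) (i + 1, k') = 0 := by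
              apply Tmap_sgl_apply_ne
              show (i + 1 : ZMod n) ≠ b.1 + 1
              intro heq
              exact hb1 (add_right_cancel heq).symm
            rw [Pi.sub_apply, h1, h2, sub_zero, mul_zero]
        rw [hsplit] at hp
        have hne : (i + 1 : ZMod n) ≠ i := succ_ne_of_neg hneg (mem_Zset.1 hi).1
        have hterm : ∀ kk : Fin m, g (Sum.inr (⟨i, hi⟩, kk)) *
            famY lam d (Sum.inr (⟨i, hi⟩, kk)) (i + 1, k') =
            -(g (Sum.inr (⟨i, hi⟩, kk)) * Tmap lam (sgl i kk) (i + 1, k')) := by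
          intro kk
          rw [famY_inr, Pi.sub_apply, sgl_apply,
            if_neg fun heq => hne (congrArg Prod.fst heq), zero_sub, mul_neg]
        rw [Finset.sum_congr rfl fun kk _ => hterm kk] at hp
        rw [Finset.sum_neg_distrib] at hp
        exact neg_eq_zero.1 hp
      exact T_coeff_zero lam hlam i (fun kk => g (Sum.inr (⟨i, hi⟩, kk))) hkey k
  have hZ : ∀ b : ↥(Zset d) × Fin m, g (Sum.inr b) = 0 := by
    intro b
    exact hZcoeff (sInf {t : ℕ | 0 < t ∧ (b.1.1 + (t : ZMod n)) ∉ Zset d}) b.1.1 b.1.2 le_rfl b.2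
  have hF : ∀ a : ↥(Fset d) × Fin m, g (Sum.inl a) = 0 := by
    rintro ⟨⟨j, hj⟩, k⟩
    have hp := hsum (j, k)
    have hZ0 : (∑ b : ↥(Zset d) × Fin m, g (Sum.inr b) * famY lam d (Sum.inr b) (j, k)) = 0 :=
      Finset.sum_eq_zero fun b _ => by rw [hZ b, zero_mul]
    rw [hZ0, add_zero] at hp
    have h1 : (∑ a : ↥(Fset d) × Fin m, g (Sum.inl a) * famY lam d (Sum.inl a) (j, k)) =
        g (Sum.inl (⟨⟨j, hj⟩, k⟩ : ↥(Fset d) × Fin m)) *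
          famY lam d (Sum.inl (⟨⟨j, hj⟩, k⟩ : ↥(Fset d) × Fin m)) (j, k) := by
      apply Finset.sum_eq_single_of_mem _ (Finset.mem_univ _)
      intro a _ hane
      rw [famY_inl, sgl_apply, if_neg, mul_zero]
      intro heq
      apply hane
      have h2 : j = a.1.1 := congrArg Prod.fst heq
      have h3 : k = a.2 := congrArg Prod.snd heq
      exact Prod.ext (Subtype.ext h2.symm) h3.symm
    rw [h1, famY_inl, sgl_apply, if_pos rfl, mul_one] at hp
    exact hp
  intro q
  rcases q with a | b
  · exact hF a
  · exact hZ b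

lemma finrank_U : Module.finrank K (ZMod n × Fin m → K) = n * m := by
  rw [Module.finrank_fintype_fun_eq_card]
  simp [Fintype.card_prod, ZMod.card]

lemma finrank_WU_caseA (lam : K) (hlam : lam ≠ 0) {d : ZMod n → ℤ}
    (hneg : ∃ i0, d i0 < 0) :
    Module.finrank K (WU (K := K) (n := n) (m := m) lam d) =
      m * ((Fset d).card + (Zset d).card) := by
  rw [WU_eq_Y lam hlam d, Y_eq_span_famY, finrank_span_eq_card (famY_li lam hlam hneg)]
  simp only [Fintype.card_sum, Fintype.card_prod, Fintype.card_coe, Fintype.card_fin]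
  ring

lemma pi_decomp (x : ZMod n × Fin m → K) :
    x = ∑ p : ZMod n × Fin m, x p • sgl p.1 p.2 := by
  funext q
  rw [Finset.sum_apply]
  simp only [Pi.smul_apply, smul_eq_mul, sgl_apply, Prod.mk.eta, mul_ite, mul_one, mul_zero]
  rw [Finset.sum_ite_eq Finset.univ q (fun p => x p), if_pos (Finset.mem_univ q)]

lemma theta_all_nonneg {d : ZMod n → ℤ} (h : ∀ i, 0 ≤ d i) : theta n d = n := by
  rw [theta, if_pos h]
  rw [Finset.sum_eq_zero, add_zero]
  intro k _
  apply Finset.sum_eq_zero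
  intro l _
  rw [if_neg]
  rintro ⟨-, hk, -⟩
  exact absurd hk (not_lt.2 (h k))

lemma WU_top_of_pos (lam : K) (hlam : lam ≠ 0) {d : ZMod n → ℤ}
    (hnn : ∀ i, 0 ≤ d i) (hpos : ∃ i0, 0 < d i0) :
    WU (K := K) (n := n) (m := m) lam d = ⊤ := by
  obtain ⟨i0, h0⟩ := hpos
  have hstep : ∀ t : ℕ, Bblk (K := K) (m := m) (i0 + (t : ZMod n)) ≤ WU lam d := by
    intro t
    induction t with
    | zero =>
      rw [show i0 + ((0 : ℕ) : ZMod n) = i0 from by push_cast; ring]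
      exact Bpos1 lam h0
    | succ t ih =>
      rcases lt_or_eq_of_le (hnn (i0 + (t : ZMod n))) with hp | hz
      · have h2 := Bpos2 (K := K) (m := m) lam hlam hp
        rwa [show i0 + (t : ZMod n) + 1 = i0 + ((t + 1 : ℕ) : ZMod n) from by push_cast; ring]
          at h2
      · have h2 := P2 (K := K) (m := m) lam hlam hz.symm ih
        rwa [show i0 + (t : ZMod n) + 1 = i0 + ((t + 1 : ℕ) : ZMod n) from by push_cast; ring]
          at h2
  rw [eq_top_iff]
  intro x _
  rw [pi_decomp x]
  apply Submodule.sum_mem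
  intro p _
  apply Submodule.smul_mem
  have e : i0 + (((p.1 - i0).val : ℕ) : ZMod n) = p.1 := by
    rw [ZMod.natCast_zmod_val]; ring
  have h2 := hstep (p.1 - i0).val
  rw [e] at h2
  exact h2 (mem_Bblk p.1 p.2)

def Dmap (lam : K) : (ZMod n × Fin m → K) →ₗ[K] (ZMod n × Fin m → K) :=
  LinearMap.id - Tmap lam

lemma Dmap_apply (lam : K) (x : ZMod n × Fin m → K) :
    Dmap lam x = x - Tmap lam x := by
  simp [Dmap, LinearMap.sub_apply]

lemma WU_all_zero (lam : K) {d : ZMod n → ℤ} (hz : ∀ i, d i = 0) :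
    WU (K := K) (n := n) (m := m) lam d =
      LinearMap.range (Dmap (n := n) (m := m) lam) := by
  apply le_antisymm
  · rw [WU, Submodule.span_le]
    rintro v (⟨i, k, hd, -⟩ | ⟨i, k, -, rfl⟩)
    · exfalso; have := hz i; omega
    · exact ⟨sgl i k, Dmap_apply lam _⟩
  · rintro y ⟨x, rfl⟩
    rw [pi_decomp x, map_sum]
    apply Submodule.sum_mem
    intro p _
    rw [map_smul]
    apply Submodule.smul_mem
    rw [Dmap_apply]
    exact Submodule.subset_span (Or.inr ⟨p.1, p.2, hz p.1, rfl⟩)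

lemma ker_blocks (lam : K) {x : ZMod n × Fin m → K}
    (hx : Tmap lam x = x) : ∀ j : ZMod n, ∀ kk : Fin m, x (j, kk) = x (0, kk) := by
  have hstep : ∀ t : ℕ, t < n → ∀ kk, x ((0 : ZMod n) - (t : ZMod n), kk) = x (0, kk) := by
    intro t
    induction t with
    | zero => intro _ kk; rw [show (0 : ZMod n) - ((0 : ℕ) : ZMod n) = 0 from by push_cast; ring]
    | succ t ih =>
      intro htn kk
      have hne : (0 : ZMod n) - (t : ZMod n) ≠ 1 := by
        intro hEq
        have h2 : ((t + 1 : ℕ) : ZMod n) = 0 := by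
          push_cast
          linear_combination -hEq
        have h3 := ZMod.val_cast_of_lt htn
        rw [show ((t + 1 : ℕ) : ZMod n) = 0 from h2] at h3
        simp only [ZMod.val_zero] at h3
        omega
      have heq := congrFun hx ((0 : ZMod n) - (t : ZMod n), kk)
      rw [Tmap_apply, if_neg hne] at heq
      have e : (0 : ZMod n) - (t : ZMod n) - 1 = (0 : ZMod n) - ((t + 1 : ℕ) : ZMod n) := by
        push_cast; ring
      rw [e] at heq
      have heq2 : x ((0 : ZMod n) - ((t + 1 : ℕ) : ZMod n), kk) =
          x ((0 : ZMod n) - (t : ZMod n), kk) := heq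
      rw [heq2, ih (by omega) kk]
  intro j kk
  have e : (0 : ZMod n) - (((0 - j).val : ℕ) : ZMod n) = j := by
    rw [ZMod.natCast_zmod_val]; ring
  have h2 := hstep (0 - j).val (ZMod.val_lt _) kk
  rwa [e] at h2

def vone : ZMod n × Fin m → K := fun p => if (p.2 : ℕ) = 0 then 1 else 0

lemma Tmap_vone : Tmap (n := n) (m := m) (1 : K) vone = vone := by
  funext p
  rcases p with ⟨j, kk⟩
  rw [Tmap_apply]
  by_cases hj : j = 1
  · rw [if_pos hj]
    show 1 * vone ((0 : ZMod n), kk) + _ = vone (j, kk)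
    rw [one_mul]
    have e1 : vone (K := K) ((0 : ZMod n), kk) = vone (j, kk) := rfl
    rw [e1, add_eq_left]
    split_ifs with hb2
    · show vone (K := K) ((0 : ZMod n), ⟨(kk : ℕ) + 1, hb2⟩) = 0
      simp [vone]
    · rfl
  · rw [if_neg hj]; rfl

lemma Tx_eq_of_ker {lam : K} {x : ZMod n × Fin m → K}
    (hx : x ∈ LinearMap.ker (Dmap (n := n) (m := m) lam)) : Tmap lam x = x := by
  have h1 := LinearMap.mem_ker.1 hx
  rw [Dmap_apply] at h1
  exact (sub_eq_zero.1 h1).symm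

lemma ker_Dmap_bot (lam : K) (hl1 : lam ≠ 1) :
    LinearMap.ker (Dmap (n := n) (m := m) lam) = ⊥ := by
  rw [eq_bot_iff]
  intro x hx
  have hTx := Tx_eq_of_ker hx
  have hb := ker_blocks lam hTx
  have heq1 : ∀ kk : Fin m, (lam - 1) * x (0, kk) +
      (if h : (kk : ℕ) + 1 < m then x (0, ⟨(kk : ℕ) + 1, h⟩) else 0) = 0 := by
    intro kk
    have h1 := congrFun hTx ((1 : ZMod n), kk)
    rw [Tmap_apply, if_pos rfl] at h1
    have h2 : x ((1 : ZMod n), kk) = x (0, kk) := hb 1 kk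
    rw [h2] at h1
    linear_combination h1
  have hc := fin_desc (sub_ne_zero.2 hl1) (fun kk => x (0, kk)) heq1
  have hx0 : x = 0 := by
    funext p
    rcases p with ⟨j, kk⟩
    rw [hb j kk]
    exact hc kk
  rw [hx0]
  exact Submodule.zero_mem ⊥

lemma ker_Dmap_one (hm : 0 < m) :
    LinearMap.ker (Dmap (n := n) (m := m) (1 : K)) = Submodule.span K {vone} := by
  apply le_antisymm
  · intro x hx
    have hTx := Tx_eq_of_ker hx
    have hb := ker_blocks 1 hTx
    have heq1 : ∀ kk : Fin m,
        (if h : (kk : ℕ) + 1 < m then x (0, ⟨(kk : ℕ) + 1, h⟩) else 0) = 0 := by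
      intro kk
      have h1 := congrFun hTx ((1 : ZMod n), kk)
      rw [Tmap_apply, if_pos rfl] at h1
      have h2 : x ((1 : ZMod n), kk) = x (0, kk) := hb 1 kk
      rw [h2] at h1
      linear_combination h1
    have hzk : ∀ kk : Fin m, (kk : ℕ) ≠ 0 → x (0, kk) = 0 := by
      intro kk hkk
      have hlt : ((kk : ℕ) - 1) + 1 < m := by have := kk.isLt; omega
      have h3 := heq1 ⟨(kk : ℕ) - 1, lt_of_le_of_lt (Nat.sub_le _ _) kk.isLt⟩
      rw [dif_pos] at h3
      · have he : (⟨((kk : ℕ) - 1) + 1, hlt⟩ : Fin m) = kk := Fin.ext (by simp; omega)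
        rwa [he] at h3
      · exact hlt
    refine Submodule.mem_span_singleton.2 ⟨x (0, ⟨0, hm⟩), ?_⟩
    funext p
    rcases p with ⟨j, kk⟩
    rw [Pi.smul_apply, smul_eq_mul]
    by_cases hkk : (kk : ℕ) = 0
    · have he : kk = ⟨0, hm⟩ := Fin.ext hkk
      show x (0, ⟨0, hm⟩) * vone (j, kk) = x (j, kk)
      rw [show vone (K := K) (j, kk) = 1 from by simp [vone, hkk], mul_one, hb j kk, he]
    · show x (0, ⟨0, hm⟩) * vone (j, kk) = x (j, kk)
      rw [show vone (K := K) (j, kk) = 0 from by simp [vone, hkk], mul_zero, hb j kk,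
        hzk kk hkk]
  · rw [Submodule.span_singleton_le_iff_mem]
    rw [LinearMap.mem_ker, Dmap_apply, Tmap_vone, sub_self]

lemma finrank_ker_Dmap (hm : 0 < m) (lam : K) :
    Module.finrank K (LinearMap.ker (Dmap (n := n) (m := m) lam)) =
      if lam = 1 then 1 else 0 := by
  by_cases h1 : lam = 1
  · subst h1
    rw [ker_Dmap_one hm, if_pos rfl]
    apply finrank_span_singleton
    intro h
    have := congrFun h ((0 : ZMod n), (⟨0, hm⟩ : Fin m))
    simp [vone] at this
  · rw [ker_Dmap_bot lam h1, if_neg h1, finrank_bot]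

lemma core_caseB (hm : 0 < m) (lam : K) (hlam : lam ≠ 0) {d : ZMod n → ℤ}
    (hnn : ∀ i, 0 ≤ d i) :
    Module.finrank K (WU (K := K) (n := n) (m := m) lam d) + delta K n d lam =
      m * theta n d := by
  rw [theta_all_nonneg hnn]
  by_cases hp : ∃ i0, 0 < d i0
  · rw [WU_top_of_pos lam hlam hnn hp, finrank_top, finrank_U]
    have hδ : delta K n d lam = 0 := by
      rw [delta, if_neg]
      rintro ⟨hall, -⟩
      obtain ⟨i0, h0⟩ := hp
      rw [hall i0] at h0
      omega
    rw [hδ, add_zero, Nat.mul_comm]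
  · have hz : ∀ i, d i = 0 := fun i => le_antisymm (not_lt.1 fun h => hp ⟨i, h⟩) (hnn i)
    rw [WU_all_zero lam hz]
    have h := LinearMap.finrank_range_add_finrank_ker (Dmap (n := n) (m := m) lam)
    rw [finrank_ker_Dmap hm lam, finrank_U] at h
    have hδ : delta K n d lam = if lam = 1 then 1 else 0 := by
      rw [delta]
      by_cases h1 : lam = 1
      · rw [if_pos ⟨hz, h1⟩, if_pos h1]
      · rw [if_neg fun hc => h1 hc.2, if_neg h1]
    rw [hδ, Nat.mul_comm]
    by_cases h1 : lam = 1
    · rw [if_pos h1] at h ⊢; omega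
    · rw [if_neg h1] at h ⊢; omega

section Gap

variable {d : ZMod n → ℤ}

/-- Distance from `k` to the next negative entry (strictly ahead). -/
def gap (d : ZMod n → ℤ) (k : ZMod n) : ℕ :=
  sInf {t : ℕ | 0 < t ∧ d (k + (t : ZMod n)) < 0}

/-- Distance from `i` to the previous negative entry (strictly behind). -/
def bgap (d : ZMod n → ℤ) (i : ZMod n) : ℕ :=
  sInf {t : ℕ | 0 < t ∧ d (i - (t : ZMod n)) < 0}

/-- The run ahead of `k` contains a positive entry. -/
def hasPos (d : ZMod n → ℤ) (k : ZMod n) : Prop :=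
  ∃ p : ℕ, 1 ≤ p ∧ p < gap d k ∧ 0 < d (k + (p : ZMod n))

/-- Predecessors of runs: negative entries followed by a non-negative entry. -/
def RP (d : ZMod n → ℤ) : Finset (ZMod n) :=
  Finset.univ.filter fun k => d k < 0 ∧ 0 ≤ d (k + 1)

lemma mem_RP {k : ZMod n} : k ∈ RP d ↔ d k < 0 ∧ 0 ≤ d (k + 1) := by
  rw [RP, Finset.mem_filter]; simp

lemma gapS_nonempty {k : ZMod n} (hk : d k < 0) :
    {t : ℕ | 0 < t ∧ d (k + (t : ZMod n)) < 0}.Nonempty :=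
  ⟨n, npos, by rwa [ZMod.natCast_self, add_zero]⟩

lemma gap_mem {k : ZMod n} (hk : d k < 0) :
    0 < gap d k ∧ d (k + ((gap d k : ℕ) : ZMod n)) < 0 :=
  Nat.sInf_mem (gapS_nonempty hk)

lemma gap_le_n {k : ZMod n} (hk : d k < 0) : gap d k ≤ n :=
  Nat.sInf_le ⟨npos, by rwa [ZMod.natCast_self, add_zero]⟩

lemma gap_min {k : ZMod n} {t : ℕ} (h1 : 0 < t) (h2 : t < gap d k) :
    0 ≤ d (k + (t : ZMod n)) := by
  have := Nat.notMem_of_lt_sInf h2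
  rw [Set.mem_setOf_eq] at this
  push_neg at this
  exact this h1

lemma gap_two {k : ZMod n} (hk : k ∈ RP d) : 2 ≤ gap d k := by
  rw [mem_RP] at hk
  have h1 := (gap_mem hk.1).1
  rcases Nat.lt_or_ge (gap d k) 2 with h | h
  · exfalso
    have hg1 : gap d k = 1 := by omega
    have h2 := (gap_mem hk.1).2
    rw [hg1] at h2
    rw [show k + ((1 : ℕ) : ZMod n) = k + 1 from by push_cast; ring] at h2
    omega
  · exact h

lemma bgapS_nonempty (hneg : ∃ i0, d i0 < 0) (i : ZMod n) :
    {t : ℕ | 0 < t ∧ d (i - (t : ZMod n)) < 0}.Nonempty := by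
  obtain ⟨i0, h0⟩ := hneg
  by_cases hii : i0 = i
  · exact ⟨n, npos, by rw [ZMod.natCast_self, sub_zero, ← hii]; exact h0⟩
  · refine ⟨(i - i0).val, ?_, ?_⟩
    · refine Nat.pos_of_ne_zero fun h => (sub_ne_zero.2 (Ne.symm hii)) ?_
      rw [← ZMod.natCast_zmod_val (i - i0), h, Nat.cast_zero]
    · have e : i - ((i - i0).val : ZMod n) = i0 := by
        rw [ZMod.natCast_zmod_val]; ring
      rw [e]; exact h0

lemma bgap_mem (hneg : ∃ i0, d i0 < 0) (i : ZMod n) :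
    0 < bgap d i ∧ d (i - ((bgap d i : ℕ) : ZMod n)) < 0 :=
  Nat.sInf_mem (bgapS_nonempty hneg i)

lemma bgap_min {i : ZMod n} {t : ℕ} (h1 : 0 < t) (h2 : t < bgap d i) :
    0 ≤ d (i - (t : ZMod n)) := by
  have := Nat.notMem_of_lt_sInf h2
  rw [Set.mem_setOf_eq] at this
  push_neg at this
  exact this h1

lemma window_aux {k k' : ZMod n} (hk' : d k' < 0) {s : ℕ} (hs : 0 < s)
    (hsl : s < gap d k) (h : k + (s : ZMod n) = k') : False := by
  have := gap_min (d := d) (k := k) hs hsl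
  rw [h] at this
  omega

lemma window_eq {k k' : ZMod n} (hk : d k < 0) (hk' : d k' < 0)
    {t t' : ℕ} (h1 : 0 < t) (h2 : t ≤ gap d k) (h3 : 0 < t') (h4 : t' ≤ gap d k')
    (heq : k + (t : ZMod n) = k' + (t' : ZMod n)) : k = k' ∧ t = t' := by
  rcases lt_trichotomy t t' with hlt | hEq | hgt
  · exfalso
    refine window_aux (d := d) (k := k') (k' := k) hk (s := t' - t) (by omega) (by omega) ?_
    have e : ((t' : ℕ) : ZMod n) = ((t' - t : ℕ) : ZMod n) + ((t : ℕ) : ZMod n) := by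
      rw [← Nat.cast_add, Nat.sub_add_cancel (by omega)]
    rw [e, ← add_assoc] at heq
    exact (add_right_cancel heq).symm
  · subst hEq
    exact ⟨add_right_cancel heq, rfl⟩
  · exfalso
    refine window_aux (d := d) (k := k) (k' := k') hk' (s := t - t') (by omega) (by omega) ?_
    have e : ((t : ℕ) : ZMod n) = ((t - t' : ℕ) : ZMod n) + ((t' : ℕ) : ZMod n) := by
      rw [← Nat.cast_add, Nat.sub_add_cancel (by omega)]
    rw [e, ← add_assoc] at heq
    exact add_right_cancel heq

lemma theta_caseA (hneg : ∃ i0, d i0 < 0) :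
    theta n d = ∑ k ∈ RP d, ((gap d k - 1) + if hasPos d k then 1 else 0) := by
  rw [theta, if_neg (by push_neg; obtain ⟨i0, h0⟩ := hneg; exact ⟨i0, by omega⟩), zero_add]
  rw [← Finset.sum_subset (Finset.subset_univ (RP d)) ?_]
  · apply Finset.sum_congr rfl
    intro k hk
    have hkRP := mem_RP.1 hk
    have hg2 := gap_two (d := d) hk
    have hgn := gap_le_n hkRP.1
    have hgmem := gap_mem hkRP.1
    have hother : ∀ l ∈ Finset.Ico 1 n, l ≠ gap d k - 1 →
        (if (∀ j : ℕ, 1 ≤ j → j ≤ l → 0 ≤ d (k + (j : ZMod n))) ∧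
            d k < 0 ∧ d (k + (l : ZMod n) + 1) < 0 then
          (if ∀ j : ℕ, 1 ≤ j → j ≤ l → d (k + (j : ZMod n)) = 0 then l else l + 1)
        else 0) = 0 := by
      intro l hl hlne
      rw [if_neg]
      rintro ⟨hnn, -, hlast⟩
      apply hlne
      have hmem2 : (l + 1) ∈ {t : ℕ | 0 < t ∧ d (k + (t : ZMod n)) < 0} := by
        refine ⟨by omega, ?_⟩
        rw [show k + ((l + 1 : ℕ) : ZMod n) = k + (l : ZMod n) + 1 from by push_cast; ring]
        exact hlast
      have hle1 : gap d k ≤ l + 1 := Nat.sInf_le hmem2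
      have hge : ¬gap d k ≤ l := by
        intro hge
        have h3 := hnn (gap d k) (by omega) hge
        have h2 := hgmem.2
        omega
      omega
    have hcond : (∀ j : ℕ, 1 ≤ j → j ≤ gap d k - 1 → 0 ≤ d (k + (j : ZMod n))) ∧
        d k < 0 ∧ d (k + ((gap d k - 1 : ℕ) : ZMod n) + 1) < 0 := by
      refine ⟨fun j h1 h2 => gap_min h1 (by omega), hkRP.1, ?_⟩
      rw [show k + ((gap d k - 1 : ℕ) : ZMod n) + 1 = k + ((gap d k : ℕ) : ZMod n) from by
        rw [Nat.cast_sub (by omega : 1 ≤ gap d k)]; push_cast; ring]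
      exact hgmem.2
    rw [Finset.sum_eq_single_of_mem (gap d k - 1)
      (Finset.mem_Ico.2 ⟨by omega, by omega⟩) hother, if_pos hcond]
    by_cases hp : hasPos d k
    · rw [if_pos hp, if_neg]
      obtain ⟨p, hp1, hp2, hp3⟩ := hp
      intro hall
      have h4 := hall p hp1 (by omega)
      omega
    · rw [if_neg hp, if_pos, add_zero]
      intro j h1 h2
      have hle := gap_min (d := d) (k := k) h1 (by omega)
      by_contra hne
      exact hp ⟨j, h1, by omega, by omega⟩
  · intro k _ hk
    apply Finset.sum_eq_zero
    intro l hl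
    rw [if_neg]
    rintro ⟨hnn, hneg2, -⟩
    rw [mem_RP] at hk
    push_neg at hk
    have h5 := hk hneg2
    have h1 := hnn 1 le_rfl (by rw [Finset.mem_Ico] at hl; omega)
    rw [show k + ((1 : ℕ) : ZMod n) = k + 1 from by push_cast; ring] at h1
    omega

def Sge (d : ZMod n → ℤ) : Finset (ZMod n) := Finset.univ.filter fun i => 0 ≤ d i

def PRf (d : ZMod n → ℤ) : Finset (ZMod n) := Finset.univ.filter fun i => inR d i

def RPpos (d : ZMod n → ℤ) : Finset (ZMod n) := (RP d).filter fun k => hasPos d k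

lemma sum_len (hneg : ∃ i0, d i0 < 0) :
    ∑ k ∈ RP d, (gap d k - 1) = (Sge d).card := by
  have hwin : ∀ k ∈ RP d,
      ((Finset.Ico 1 (gap d k)).image fun t : ℕ => k + (t : ZMod n)).card = gap d k - 1 := by
    intro k hk
    rw [Finset.card_image_of_injOn, Nat.card_Ico]
    intro t ht t' ht' hEq
    rw [Finset.mem_coe, Finset.mem_Ico] at ht ht'
    have hgn := gap_le_n (mem_RP.1 hk).1
    have h2 : ((t : ℕ) : ZMod n) = ((t' : ℕ) : ZMod n) := add_left_cancel hEq
    have h3 := congrArg ZMod.val h2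
    rwa [ZMod.val_cast_of_lt (by omega), ZMod.val_cast_of_lt (by omega)] at h3
  have hdisj : ∀ k1 ∈ RP d, ∀ k2 ∈ RP d, k1 ≠ k2 →
      Disjoint ((Finset.Ico 1 (gap d k1)).image fun t : ℕ => k1 + (t : ZMod n))
        ((Finset.Ico 1 (gap d k2)).image fun t : ℕ => k2 + (t : ZMod n)) := by
    intro k1 hk1 k2 hk2 hne
    rw [Finset.disjoint_left]
    intro x hx1 hx2
    obtain ⟨t1, ht1, he1⟩ := Finset.mem_image.1 hx1
    obtain ⟨t2, ht2, he2⟩ := Finset.mem_image.1 hx2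
    rw [Finset.mem_Ico] at ht1 ht2
    have h4 := window_eq (mem_RP.1 hk1).1 (mem_RP.1 hk2).1 (by omega) (by omega) (by omega)
      (by omega) (he1.trans he2.symm)
    exact hne h4.1
  have hset : Sge d =
      (RP d).biUnion fun k => (Finset.Ico 1 (gap d k)).image fun t : ℕ => k + (t : ZMod n) := by
    ext i
    constructor
    · intro hi
      have h0 : 0 ≤ d i := (Finset.mem_filter.1 hi).2
      have hb := bgap_mem hneg i
      refine Finset.mem_biUnion.2 ⟨i - ((bgap d i : ℕ) : ZMod n), ?_, ?_⟩
      · rw [mem_RP]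
        refine ⟨hb.2, ?_⟩
        by_cases hb1 : bgap d i = 1
        · rw [show i - ((bgap d i : ℕ) : ZMod n) + 1 = i from by rw [hb1]; push_cast; ring]
          exact h0
        · have h2 := bgap_min (d := d) (i := i) (t := bgap d i - 1)
            (by have := hb.1; omega) (by omega)
          rwa [show i - ((bgap d i : ℕ) : ZMod n) + 1 = i - ((bgap d i - 1 : ℕ) : ZMod n) from by
            rw [Nat.cast_sub (by omega : 1 ≤ bgap d i)]; push_cast; ring]
      · rw [Finset.mem_image]
        refine ⟨bgap d i, Finset.mem_Ico.2 ⟨by have := hb.1; omega, ?_⟩, ?_⟩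
        · by_contra hge
          push_neg at hge
          have hgmem2 := gap_mem (d := d) hb.2
          rcases Nat.lt_or_ge (gap d (i - ((bgap d i : ℕ) : ZMod n))) (bgap d i) with hlt | hge2
          · have h5 := bgap_min (d := d) (i := i)
              (t := bgap d i - gap d (i - ((bgap d i : ℕ) : ZMod n)))
              (by omega) (by omega)
            rw [show i - ((bgap d i - gap d (i - ((bgap d i : ℕ) : ZMod n)) : ℕ) : ZMod n) =
                i - ((bgap d i : ℕ) : ZMod n) +
                  ((gap d (i - ((bgap d i : ℕ) : ZMod n)) : ℕ) : ZMod n) from by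
              rw [Nat.cast_sub (by omega)]; ring] at h5
            omega
          · have heq2 : gap d (i - ((bgap d i : ℕ) : ZMod n)) = bgap d i := by omega
            rw [heq2] at hgmem2
            rw [show i - ((bgap d i : ℕ) : ZMod n) + ((bgap d i : ℕ) : ZMod n) = i from by
              ring] at hgmem2
            omega
        · rw [show i - ((bgap d i : ℕ) : ZMod n) + ((bgap d i : ℕ) : ZMod n) = i from by ring]
    · intro hi
      obtain ⟨k, hk, him⟩ := Finset.mem_biUnion.1 hi
      obtain ⟨t, ht, rfl⟩ := Finset.mem_image.1 him
      rw [Finset.mem_Ico] at ht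
      exact Finset.mem_filter.2 ⟨Finset.mem_univ _, gap_min (by omega) ht.2⟩
  rw [hset, Finset.card_biUnion hdisj]
  exact (Finset.sum_congr rfl hwin).symm

lemma Sge_card_eq {d : ZMod n → ℤ} : (Sge d).card = (PRf d).card + (Zset d).card := by
  rw [← Finset.card_union_of_disjoint (by
    rw [Finset.disjoint_left]
    intro i h1 h2
    exact Zset_not_inR h2 ((Finset.mem_filter.1 h1).2))]
  congr 1
  ext i
  rw [Finset.mem_union, Sge, PRf, Finset.mem_filter, Finset.mem_filter, mem_Zset]
  constructor
  · rintro ⟨-, h0⟩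
    by_cases hz : posA d i ∨ posB d i
    · exact Or.inl ⟨Finset.mem_univ _, h0, hz⟩
    · push_neg at hz
      refine Or.inr ⟨?_, hz.1, hz.2⟩
      rcases lt_or_eq_of_le h0 with hlt | hEq
      · exact absurd (posA_of_pos hlt) hz.1
      · exact hEq.symm
  · rintro (⟨-, h1, -⟩ | ⟨h1, -, -⟩)
    · exact ⟨Finset.mem_univ _, h1⟩
    · exact ⟨Finset.mem_univ _, le_of_eq h1.symm⟩

lemma F_card (hneg : ∃ i0, d i0 < 0) :
    (Fset d).card = (PRf d).card + (RPpos d).card := by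
  have hFsplit : Fset d = PRf d ∪ (Finset.univ.filter fun j => inR d (j - 1) ∧ ¬inR d j) := by
    ext j
    rw [mem_Fset, Finset.mem_union, PRf, Finset.mem_filter, Finset.mem_filter]
    constructor
    · rintro (h | h)
      · exact Or.inl ⟨Finset.mem_univ _, h⟩
      · by_cases h2 : inR d j
        · exact Or.inl ⟨Finset.mem_univ _, h2⟩
        · exact Or.inr ⟨Finset.mem_univ _, h, h2⟩
    · rintro (⟨-, h⟩ | ⟨-, h1, -⟩)
      · exact Or.inl h
      · exact Or.inr h1
  rw [hFsplit, Finset.card_union_of_disjoint (by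
    rw [Finset.disjoint_left]
    intro j h1 h2
    exact (Finset.mem_filter.1 h2).2.2 (Finset.mem_filter.1 h1).2)]
  congr 1
  symm
  apply Finset.card_bij fun (k : ZMod n) (_ : k ∈ RPpos d) => k + ((gap d k : ℕ) : ZMod n)
  · intro k hk
    have hkRP := mem_RP.1 (Finset.mem_filter.1 hk).1
    have hkpos := (Finset.mem_filter.1 hk).2
    have hg2 := gap_two (Finset.mem_filter.1 hk).1
    have hgn := gap_le_n hkRP.1
    have hgm := gap_mem hkRP.1
    rw [Finset.mem_filter]
    refine ⟨Finset.mem_univ _, ?_, ?_⟩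
    · have he : k + ((gap d k : ℕ) : ZMod n) - 1 = k + ((gap d k - 1 : ℕ) : ZMod n) := by
        rw [Nat.cast_sub (by omega)]; push_cast; ring
      rw [he]
      refine ⟨gap_min (by omega) (by omega), Or.inr ?_⟩
      have hPne : ((Finset.Ico 1 (gap d k)).filter fun p : ℕ => 0 < d (k + (p : ZMod n))).Nonempty := by
        obtain ⟨p, h1, h2, h3⟩ := hkpos
        exact ⟨p, Finset.mem_filter.2 ⟨Finset.mem_Ico.2 ⟨h1, h2⟩, h3⟩⟩
      set p0 := ((Finset.Ico 1 (gap d k)).filter fun p : ℕ => 0 < d (k + (p : ZMod n))).max' hPne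
        with hp0
      have hp0mem := ((Finset.Ico 1 (gap d k)).filter
        fun p : ℕ => 0 < d (k + (p : ZMod n))).max'_mem hPne
      rw [Finset.mem_filter, Finset.mem_Ico] at hp0mem
      refine ⟨gap d k - 1 - p0, by omega, ?_, ?_⟩
      · rw [show k + ((gap d k - 1 : ℕ) : ZMod n) - ((gap d k - 1 - p0 : ℕ) : ZMod n) =
            k + ((p0 : ℕ) : ZMod n) from by
          rw [Nat.cast_sub (show p0 ≤ gap d k - 1 by omega)]; ring]
        exact hp0mem.2
      · intro u hu
        rw [show k + ((gap d k - 1 : ℕ) : ZMod n) - ((u : ℕ) : ZMod n) =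
            k + ((gap d k - 1 - u : ℕ) : ZMod n) from by
          rw [Nat.cast_sub (show u ≤ gap d k - 1 by omega)]; ring]
        have hnn := gap_min (d := d) (k := k) (t := gap d k - 1 - u) (by omega) (by omega)
        by_contra hne0
        have hmemPf : (gap d k - 1 - u) ∈
            (Finset.Ico 1 (gap d k)).filter fun p : ℕ => 0 < d (k + (p : ZMod n)) :=
          Finset.mem_filter.2 ⟨Finset.mem_Ico.2 ⟨by omega, by omega⟩, by omega⟩
        have hle := Finset.le_max' _ _ hmemPf
        rw [← hp0] at hle
        omega
    · intro hinr
      have h6 := hinr.1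
      have h2 := hgm.2
      omega
  · intro k1 hk1 k2 hk2 hEq
    have h1 := mem_RP.1 (Finset.mem_filter.1 hk1).1
    have h2 := mem_RP.1 (Finset.mem_filter.1 hk2).1
    exact (window_eq h1.1 h2.1 (gap_mem h1.1).1 le_rfl (gap_mem h2.1).1 le_rfl hEq).1
  · intro j hj
    rw [Finset.mem_filter] at hj
    obtain ⟨-, hR, hNR⟩ := hj
    have hdj : d j < 0 := by
      by_contra h
      push_neg at h
      have h3 := inR_succ hR (by rwa [sub_add_cancel])
      rw [sub_add_cancel] at h3
      exact hNR h3
    have hb := bgap_mem hneg (j - 1)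
    set b := bgap d (j - 1) with hbdef
    have hk : d (j - 1 - ((b : ℕ) : ZMod n)) < 0 := hb.2
    have hgap : gap d (j - 1 - ((b : ℕ) : ZMod n)) = b + 1 := by
      apply le_antisymm
      · apply Nat.sInf_le
        refine ⟨by omega, ?_⟩
        rw [show j - 1 - ((b : ℕ) : ZMod n) + ((b + 1 : ℕ) : ZMod n) = j from by push_cast; ring]
        exact hdj
      · by_contra hlt
        push_neg at hlt
        have hgm := gap_mem hk
        rcases Nat.lt_or_ge (gap d (j - 1 - ((b : ℕ) : ZMod n))) b with hlt2 | hge2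
        · have h5 := bgap_min (d := d) (i := j - 1)
            (t := b - gap d (j - 1 - ((b : ℕ) : ZMod n))) (by omega) (by omega)
          rw [show j - 1 - ((b - gap d (j - 1 - ((b : ℕ) : ZMod n)) : ℕ) : ZMod n) =
              j - 1 - ((b : ℕ) : ZMod n) +
                ((gap d (j - 1 - ((b : ℕ) : ZMod n)) : ℕ) : ZMod n) from by
            rw [Nat.cast_sub (by omega)]; ring] at h5
          omega
        · have heq2 : gap d (j - 1 - ((b : ℕ) : ZMod n)) = b := by omega
          rw [heq2] at hgm
          rw [show j - 1 - ((b : ℕ) : ZMod n) + ((b : ℕ) : ZMod n) = j - 1 from by ring] at hgm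
          have h7 := hR.1
          omega
    refine ⟨j - 1 - ((b : ℕ) : ZMod n), ?_, ?_⟩
    · rw [RPpos, Finset.mem_filter, mem_RP]
      refine ⟨⟨hk, ?_⟩, ?_⟩
      · by_cases hb1 : b = 1
        · rw [show j - 1 - ((b : ℕ) : ZMod n) + 1 = j - 1 from by rw [hb1]; push_cast; ring]
          exact hR.1
        · have h2 := bgap_min (d := d) (i := j - 1) (t := b - 1) (by have := hb.1; omega)
            (by omega)
          rwa [show j - 1 - ((b : ℕ) : ZMod n) + 1 = j - 1 - ((b - 1 : ℕ) : ZMod n) from by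
            rw [Nat.cast_sub (by have := hb.1; omega)]; push_cast; ring]
      · rw [hasPos, hgap]
        rcases hR.2 with ⟨t, htn, hpos, hz⟩ | ⟨t, htn, hpos, hz⟩
        · rcases Nat.eq_zero_or_pos t with rfl | ht0
          · refine ⟨b, by have := hb.1; omega, by omega, ?_⟩
            rw [show j - 1 - ((b : ℕ) : ZMod n) + ((b : ℕ) : ZMod n) = j - 1 from by ring]
            rwa [show j - 1 + ((0 : ℕ) : ZMod n) = j - 1 from by push_cast; ring] at hpos
          · exfalso
            by_cases ht1 : t = 1
            · rw [ht1, show j - 1 + ((1 : ℕ) : ZMod n) = j from by push_cast; ring] at hpos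
              omega
            · have h4 := hz 1 (by omega)
              rw [show j - 1 + ((1 : ℕ) : ZMod n) = j from by push_cast; ring] at h4
              omega
        · have htb : t < b := by
            rcases Nat.lt_or_ge t b with h | h
            · exact h
            · exfalso
              rcases Nat.eq_or_lt_of_le h with hEq | hlt'
              · rw [hEq] at hk
                omega
              · have h4 := hz b (by omega)
                omega
          refine ⟨b - t, by omega, by omega, ?_⟩
          rw [show j - 1 - ((b : ℕ) : ZMod n) + ((b - t : ℕ) : ZMod n) =
              j - 1 - ((t : ℕ) : ZMod n) from by rw [Nat.cast_sub (by omega)]; ring]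
          exact hpos
    · rw [hgap, show j - 1 - ((b : ℕ) : ZMod n) + ((b + 1 : ℕ) : ZMod n) = j from by
        push_cast; ring]

end Gap



/-- The core combinatorial computation. -/
lemma core (hm : 0 < m) (lam : K) (hlam : lam ≠ 0) (d : ZMod n → ℤ) :
    Module.finrank K ((W K n m d).map (psi lam)) + delta K n d lam = m * theta n d := by
  rw [map_W_eq lam d]
  by_cases hneg : ∃ i0, d i0 < 0
  · have hδ : delta K n d lam = 0 := by
      rw [delta, if_neg]
      rintro ⟨hall, -⟩
      obtain ⟨i0, h0⟩ := hneg
      rw [hall i0] at h0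
      omega
    rw [hδ, add_zero, finrank_WU_caseA lam hlam hneg, theta_caseA hneg,
      Finset.sum_add_distrib]
    have h1 : (∑ k ∈ RP d, if hasPos d k then 1 else 0) = (RPpos d).card := by
      rw [RPpos]
      exact (Finset.card_filter _ _).symm
    rw [h1, sum_len hneg, Sge_card_eq, F_card hneg]
    ring
  · push_neg at hneg
    exact core_caseB hm lam hlam hneg

end NZ

end Aux
/-- For an aperiodic `s`-sequence `d` of length `rs`, `λ ≠ 0` and `m ≥ 1`:
`dim (W + G) − dim G = m·θ(d) − δ(d, λ)`. -/
theorem statement6 (K : Type*) [Field K] (s r m : ℕ) (hs : 0 < s) (hr : 0 < r)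
    (hm : 0 < m) (lam : K) (hlam : lam ≠ 0) (d : ZMod (r * s) → ℤ)
    (haper : ∀ l : ℕ, 0 < l → l < r →
      ¬ ∀ i : ZMod (r * s), d (i + ((l * s : ℕ) : ZMod (r * s))) = d i) :
    haveI : NeZero (r * s) := ⟨(Nat.mul_pos hr hs).ne'⟩
    (Module.finrank K ↥(W K (r * s) m d ⊔ G K (r * s) m lam) : ℤ) -
        (Module.finrank K ↥(G K (r * s) m lam) : ℤ) =
      (m : ℤ) * theta (r * s) d - delta K (r * s) d lam := by
  haveI : NeZero (r * s) := ⟨(Nat.mul_pos hr hs).ne'⟩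
  show (Module.finrank K ↥(W K (r * s) m d ⊔ G K (r * s) m lam) : ℤ) -
        (Module.finrank K ↥(G K (r * s) m lam) : ℤ) =
      (m : ℤ) * theta (r * s) d - delta K (r * s) d lam
  have h1 := key (n := r * s) (m := m) lam d
  have h2 := core (n := r * s) (m := m) hm lam hlam d
  have h3 := finrank_G (n := r * s) (m := m) lam
  have h2' : (Module.finrank K ((W K (r * s) m d).map (psi lam)) : ℤ) +
      (delta K (r * s) d lam : ℤ) = (m : ℤ) * (theta (r * s) d : ℤ) := by
    exact_mod_cast h2
  rw [h1, h3]
  push_cast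
  linarith [h2']

end Stmt6
end
end
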